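/- arXiv:2411.13739 — 9 statements merged into one kernel-verified Lean document; each statement's English description precedes it below -/
import Mathlib

section
/- Let P_i be a finite complete family of pairwise orthogonal projection operators on a finite-dimensional inner product space (so that their sum is the identity), and let T be a linear operator. Define the nonnegative matrix A by A_{ij} = the operator norm of P_i T P_j. Then every eigenvalue c of T satisfies |c| ≤ the largest eigenvalue (spectral radius) of A. -/
/-!
For an eigenvector `v` of `T`, the vector `x i = ‖P i v‖` is nonnegative and nonzero, and
since `P i (T v) = ∑ j, (P i T P j) (P j v)` it satisfies `|c| • x ≤ A *ᵥ x` entrywise.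
Iterating with the nonnegative matrix `A` gives `|c| ^ k • x ≤ A ^ k *ᵥ x`, hence
`|c| ^ k ≤ ‖A ^ k‖`, and Gelfand's formula `‖A ^ k‖ ^ (1 / k) → ρ(A)` yields `|c| ≤ ρ(A)`.
-/

open scoped ENNReal NNReal
open Filter

-- Any algebra norm works in Gelfand's formula; the ℓ∞ operator norm is the one that sees
-- entrywise inequalities between nonnegative vectors.
attribute [local instance] Matrix.linftyOpNormedAddCommGroup Matrix.linftyOpNormedRing
  Matrix.linftyOpNormedAlgebra

theorem le_spectralRadius_of_forall_pow_le_nnnorm_pow {𝔸 : Type*} [NormedRing 𝔸]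
    [NormedAlgebra ℂ 𝔸] [CompleteSpace 𝔸] {a : 𝔸} {r : ℝ≥0} (h : ∀ k, r ^ k ≤ ‖a ^ k‖₊) :
    (r : ℝ≥0∞) ≤ spectralRadius ℂ a := by
  refine ge_of_tendsto (spectrum.pow_nnnorm_pow_one_div_tendsto_nhds_spectralRadius a) ?_
  filter_upwards [eventually_ne_atTop 0] with k hk
  calc (r : ℝ≥0∞) = ((r : ℝ≥0∞) ^ k) ^ (1 / k : ℝ) := by
        rw [one_div, ENNReal.pow_rpow_inv_natCast hk]
    _ ≤ (‖a ^ k‖₊ : ℝ≥0∞) ^ (1 / k : ℝ) := by gcongr; exact_mod_cast h k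

namespace Matrix

variable {ι : Type*} [Fintype ι]

theorem mulVec_mono_of_nonneg {A : Matrix ι ι ℝ} (hA : ∀ i j, 0 ≤ A i j) {x y : ι → ℝ}
    (hxy : x ≤ y) : A *ᵥ x ≤ A *ᵥ y := fun i =>
  Finset.sum_le_sum fun j _ => mul_le_mul_of_nonneg_left (hxy j) (hA i j)

variable [DecidableEq ι]

theorem pow_smul_le_pow_mulVec {A : Matrix ι ι ℝ} (hA : ∀ i j, 0 ≤ A i j) {r : ℝ} (hr : 0 ≤ r)
    {x : ι → ℝ} (hx : r • x ≤ A *ᵥ x) (k : ℕ) : r ^ k • x ≤ (A ^ k) *ᵥ x := by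
  induction k with
  | zero => simp
  | succ k ih =>
    calc r ^ (k + 1) • x = r ^ k • (r • x) := by rw [pow_succ, mul_smul]
      _ ≤ r ^ k • (A *ᵥ x) := smul_le_smul_of_nonneg_left hx (pow_nonneg hr k)
      _ = A *ᵥ (r ^ k • x) := (mulVec_smul A _ x).symm
      _ ≤ A *ᵥ ((A ^ k) *ᵥ x) := mulVec_mono_of_nonneg hA ih
      _ = (A ^ (k + 1)) *ᵥ x := by rw [mulVec_mulVec, pow_succ']

theorem linfty_opNNNorm_map_ofReal (B : Matrix ι ι ℝ) :
    ‖B.map ((↑) : ℝ → ℂ)‖₊ = ‖B‖₊ := by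
  simp only [linfty_opNNNorm_def, map_apply, Complex.nnnorm_real]

theorem pow_le_linfty_opNorm_pow {A : Matrix ι ι ℝ} (hA : ∀ i j, 0 ≤ A i j) {r : ℝ} (hr : 0 ≤ r)
    {x : ι → ℝ} (hx0 : 0 ≤ x) (hx : x ≠ 0) (h : r • x ≤ A *ᵥ x) (k : ℕ) :
    r ^ k ≤ ‖A ^ k‖ := by
  have hpow := pow_smul_le_pow_mulVec hA hr h k
  refine le_of_mul_le_mul_right ?_ (norm_pos_iff.2 hx)
  calc r ^ k * ‖x‖ = ‖r ^ k • x‖ := by rw [norm_smul, Real.norm_of_nonneg (pow_nonneg hr k)]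
    _ ≤ ‖(A ^ k) *ᵥ x‖ := (pi_norm_le_iff_of_nonneg (norm_nonneg _)).2 fun i => by
      rw [Real.norm_of_nonneg
        (show 0 ≤ (r ^ k • x) i from mul_nonneg (pow_nonneg hr k) (hx0 i))]
      exact (hpow i).trans ((Real.le_norm_self _).trans (norm_le_pi_norm _ i))
    _ ≤ ‖A ^ k‖ * ‖x‖ := linfty_opNorm_mulVec _ _

theorem coe_le_spectralRadius_of_smul_le_mulVec {A : Matrix ι ι ℝ} (hA : ∀ i j, 0 ≤ A i j)
    {r : ℝ≥0} {x : ι → ℝ} (hx0 : 0 ≤ x) (hx : x ≠ 0) (h : (r : ℝ) • x ≤ A *ᵥ x) :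
    (r : ℝ≥0∞) ≤ spectralRadius ℂ (A.map ((↑) : ℝ → ℂ)) := by
  refine le_spectralRadius_of_forall_pow_le_nnnorm_pow fun k => ?_
  have hmap : A.map ((↑) : ℝ → ℂ) ^ k = (A ^ k).map (↑) := (A.map_pow Complex.ofRealHom k).symm
  rw [hmap, linfty_opNNNorm_map_ofReal, ← NNReal.coe_le_coe]
  exact_mod_cast pow_le_linfty_opNorm_pow hA r.2 hx0 hx h k

end Matrix

theorem ContinuousLinearMap.sum_apply_eq_self_of_sum_eq_one {R M ι : Type*} [Semiring R]
    [TopologicalSpace M] [AddCommMonoid M] [ContinuousAdd M] [Module R M] [Fintype ι]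
    {f : ι → M →L[R] M} (hsum : ∑ i, f i = 1) (v : M) : ∑ i, f i v = v := by
  rw [← sum_apply, hsum, one_apply_eq_self]

theorem ContinuousLinearMap.norm_smul_le_sum_norm_comp_mul_norm {𝕜 E ι : Type*}
    [NontriviallyNormedField 𝕜] [NormedAddCommGroup E] [NormedSpace 𝕜 E] [Fintype ι]
    {P : ι → E →L[𝕜] E} (hidem : ∀ i, P i ∘L P i = P i) (hsum : ∑ i, P i = 1)
    {T : E →L[𝕜] E} {c : 𝕜} {v : E} (hv : T v = c • v) (i : ι) :
    ‖c‖ * ‖P i v‖ ≤ ∑ j, ‖P i ∘L T ∘L P j‖ * ‖P j v‖ := by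
  have hdecomp : ∑ j, P j (P j v) = v := by
    simp_rw [← comp_apply, hidem]
    exact sum_apply_eq_self_of_sum_eq_one hsum v
  calc ‖c‖ * ‖P i v‖ = ‖P i (T v)‖ := by rw [hv, map_smul, norm_smul]
    _ = ‖∑ j, (P i ∘L T ∘L P j) (P j v)‖ := by
      conv_lhs => rw [← hdecomp]
      simp only [map_sum, comp_apply]
    _ ≤ ∑ j, ‖(P i ∘L T ∘L P j) (P j v)‖ := norm_sum_le _ _
    _ ≤ ∑ j, ‖P i ∘L T ∘L P j‖ * ‖P j v‖ := Finset.sum_le_sum fun j _ => le_opNorm _ _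

theorem stmt_0_general
    {V : Type*} [NormedAddCommGroup V] [InnerProductSpace ℂ V] [FiniteDimensional ℂ V]
    {n : ℕ} (P : Fin n → V →L[ℂ] V)
    (hidem : ∀ i, P i ∘L P i = P i)
    (hsum : ∑ i, P i = 1)
    (T : V →L[ℂ] V)
    (A : Matrix (Fin n) (Fin n) ℝ)
    (hA : ∀ i j, A i j = ‖P i ∘L T ∘L P j‖)
    (c : ℂ) (hc : Module.End.HasEigenvalue (T : V →ₗ[ℂ] V) c) :
    (‖c‖₊ : ℝ≥0∞) ≤ ⨆ μ ∈ spectrum ℂ (A.map (fun x : ℝ => (x : ℂ))), (‖μ‖₊ : ℝ≥0∞) := by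
  obtain ⟨v, hv⟩ := hc.exists_hasEigenvector
  have hv_ne : (fun i => ‖P i v‖) ≠ 0 := fun hzero => hv.2 <| by
    rw [← ContinuousLinearMap.sum_apply_eq_self_of_sum_eq_one hsum v]
    exact Finset.sum_eq_zero fun j _ => norm_eq_zero.1 (congrFun hzero j)
  refine Matrix.coe_le_spectralRadius_of_smul_le_mulVec (fun i j => (hA i j).symm ▸ norm_nonneg _)
    (fun i => norm_nonneg _) hv_ne fun i => ?_
  simpa [Matrix.mulVec, dotProduct, hA] using
    ContinuousLinearMap.norm_smul_le_sum_norm_comp_mul_norm hidem hsum hv.apply_eq_smul i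

/-- Block-norm bound on eigenvalues. If `P i` is a complete family of
pairwise-orthogonal orthogonal projections summing to the identity and
`A i j = ‖P i ∘L T ∘L P j‖`, then every eigenvalue `c` of `T` satisfies
`‖c‖ ≤ spectralRadius A` (spectral radius taken over the complex spectrum of `A`). -/
theorem stmt_0
    {V : Type*} [NormedAddCommGroup V] [InnerProductSpace ℂ V] [FiniteDimensional ℂ V]
    {n : ℕ} (P : Fin n → V →L[ℂ] V)
    (hidem : ∀ i, P i ∘L P i = P i)
    (hsa : ∀ i, IsSelfAdjoint (P i))
    (horth : ∀ i j, i ≠ j → P i ∘L P j = 0)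
    (hsum : ∑ i, P i = 1)
    (T : V →L[ℂ] V)
    (A : Matrix (Fin n) (Fin n) ℝ)
    (hA : ∀ i j, A i j = ‖P i ∘L T ∘L P j‖)
    (c : ℂ) (hc : Module.End.HasEigenvalue (T : V →ₗ[ℂ] V) c) :
    (‖c‖₊ : ℝ≥0∞) ≤ ⨆ μ ∈ spectrum ℂ (A.map (fun x : ℝ => (x : ℂ))), (‖μ‖₊ : ℝ≥0∞) :=
  stmt_0_general P hidem hsum T A hA c hc
end

section
/- Let Π and G be two orthogonal projection operators on a finite-dimensional inner product space, let Π' be the orthogonal projector onto the intersection of the images of Π and G (equivalently the unit eigenspace of ΠGΠ), and suppose λ_max := ||ΠGΠ - Π'||_∞ ≤ 1/2. Then ||(I - Π) G Π||_∞ = sqrt(λ_max (1 - λ_max)). -/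
/-- Let `Pr` and `G` be orthogonal projections on a finite-dimensional
complex inner product space, `Pr'` the orthogonal projector onto `Im Pr ⊓ Im G`.
If `lam = ‖Pr G Pr - Pr'‖ ≤ 1/2`, then `‖(I - Pr) G Pr‖ = √(lam (1 - lam))`. -/
theorem stmt_1
    {V : Type*} [NormedAddCommGroup V] [InnerProductSpace ℂ V] [FiniteDimensional ℂ V]
    (Pr G Pr' : V →L[ℂ] V)
    (hPr : Pr ∘L Pr = Pr) (hPrsa : IsSelfAdjoint Pr)
    (hG : G ∘L G = G) (hGsa : IsSelfAdjoint G)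
    (hPr' : Pr' ∘L Pr' = Pr') (hPr'sa : IsSelfAdjoint Pr')
    (hrange : LinearMap.range (Pr' : V →ₗ[ℂ] V)
      = LinearMap.range (Pr : V →ₗ[ℂ] V) ⊓ LinearMap.range (G : V →ₗ[ℂ] V))
    (lam : ℝ) (hlam : lam = ‖Pr ∘L G ∘L Pr - Pr'‖)
    (hhalf : lam ≤ 1 / 2) :
    ‖(1 - Pr) ∘L G ∘L Pr‖ = Real.sqrt (lam * (1 - lam)) := by
  -- mul versions of idempotency
  have hPrm : Pr * Pr = Pr := hPr
  have hGm : G * G = G := hG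
  have hPr'm : Pr' * Pr' = Pr' := hPr'
  -- Pr and G fix the range of Pr'
  have hfixP : Pr * Pr' = Pr' := by
    ext x
    have hx : Pr' x ∈ LinearMap.range (Pr : V →ₗ[ℂ] V) := by
      have h1 : Pr' x ∈ LinearMap.range (Pr' : V →ₗ[ℂ] V) := ⟨x, rfl⟩
      rw [hrange] at h1; exact h1.1
    obtain ⟨y, hy⟩ := hx
    have h2 := DFunLike.congr_fun hPr y
    simp only [ContinuousLinearMap.comp_apply] at h2
    simp only [ContinuousLinearMap.coe_coe] at hy
    simpa [ContinuousLinearMap.mul_apply, ← hy] using h2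
  have hfixG : G * Pr' = Pr' := by
    ext x
    have hx : Pr' x ∈ LinearMap.range (G : V →ₗ[ℂ] V) := by
      have h1 : Pr' x ∈ LinearMap.range (Pr' : V →ₗ[ℂ] V) := ⟨x, rfl⟩
      rw [hrange] at h1; exact h1.2
    obtain ⟨y, hy⟩ := hx
    have h2 := DFunLike.congr_fun hG y
    simp only [ContinuousLinearMap.comp_apply] at h2
    simp only [ContinuousLinearMap.coe_coe] at hy
    simpa [ContinuousLinearMap.mul_apply, ← hy] using h2
  have hP'P : Pr' * Pr = Pr' := by
    have := congrArg star hfixP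
    rwa [star_mul, hPrsa.star_eq, hPr'sa.star_eq] at this
  have hP'G : Pr' * G = Pr' := by
    have := congrArg star hfixG
    rwa [star_mul, hGsa.star_eq, hPr'sa.star_eq] at this
  -- tail versions for assoc-normal-form rewriting
  have tP : ∀ X : V →L[ℂ] V, Pr * (Pr * X) = Pr * X := fun X => by rw [← mul_assoc, hPrm]
  have tG : ∀ X : V →L[ℂ] V, G * (G * X) = G * X := fun X => by rw [← mul_assoc, hGm]
  have tPP' : ∀ X : V →L[ℂ] V, Pr * (Pr' * X) = Pr' * X := fun X => by rw [← mul_assoc, hfixP]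
  have tGP' : ∀ X : V →L[ℂ] V, G * (Pr' * X) = Pr' * X := fun X => by rw [← mul_assoc, hfixG]
  have tP'P : ∀ X : V →L[ℂ] V, Pr' * (Pr * X) = Pr' * X := fun X => by rw [← mul_assoc, hP'P]
  have tP'G : ∀ X : V →L[ℂ] V, Pr' * (G * X) = Pr' * X := fun X => by rw [← mul_assoc, hP'G]
  have tP'P' : ∀ X : V →L[ℂ] V, Pr' * (Pr' * X) = Pr' * X := fun X => by rw [← mul_assoc, hPr'm]
  -- S = Pr*G*Pr - Pr' is a star_mul_self, hence nonneg
  have hstarC : star (G * Pr * (1 - Pr')) = (1 - Pr') * (Pr * G) := by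
    simp [star_mul, hPrsa.star_eq, hGsa.star_eq, hPr'sa.star_eq, mul_assoc]
  have key : star (G * Pr * (1 - Pr')) * (G * Pr * (1 - Pr')) = Pr * G * Pr - Pr' := by
    rw [hstarC]
    simp only [mul_sub, sub_mul, mul_one, one_mul, mul_assoc, tP, tG, tPP', tGP', tP'P, tP'G,
      tP'P', hPrm, hGm, hfixP, hfixG, hP'P, hP'G, hPr'm]
    abel
  have hSnn : (0 : V →L[ℂ] V) ≤ Pr * G * Pr - Pr' := key ▸ star_mul_self_nonneg _
  have hSsa : IsSelfAdjoint (Pr * G * Pr - Pr') := by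
    rw [← key]; exact IsSelfAdjoint.star_mul_self _
  -- the operator A
  have hAA : star ((1 - Pr) * G * Pr) * ((1 - Pr) * G * Pr)
      = (Pr * G * Pr - Pr') - (Pr * G * Pr - Pr') * (Pr * G * Pr - Pr') := by
    have hstarA : star ((1 - Pr) * G * Pr) = Pr * (G * (1 - Pr)) := by
      simp [star_mul, hPrsa.star_eq, hGsa.star_eq, mul_assoc]
    rw [hstarA]
    simp only [mul_sub, sub_mul, mul_one, one_mul, mul_assoc, tP, tG, tPP', tGP', tP'P, tP'G,
      tP'P', hPrm, hGm, hfixP, hfixG, hP'P, hP'G, hPr'm]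
    abel
  -- handle trivial space
  rcases subsingleton_or_nontrivial V with hV | hV
  · have h0 : ((1 - Pr) ∘L G ∘L Pr) = 0 := by ext x; exact Subsingleton.elim _ _
    have hl0 : lam = 0 := by
      rw [hlam, show (Pr ∘L G ∘L Pr - Pr') = 0 from by ext x; exact Subsingleton.elim _ _,
        norm_zero]
    rw [h0, hl0, norm_zero]
    norm_num
  have h10 : (1 : V →L[ℂ] V) ≠ 0 := by
    intro h
    obtain ⟨x, hx⟩ := exists_ne (0 : V)
    exact hx (by simpa using DFunLike.congr_fun h x)
  haveI : Nontrivial (V →L[ℂ] V) := nontrivial_of_ne 1 0 h10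
  -- norm facts
  have hlam' : lam = ‖Pr * G * Pr - Pr'‖ := hlam
  have hlam0 : 0 ≤ lam := hlam' ▸ norm_nonneg _
  have hmem : lam ∈ spectrum ℝ (Pr * G * Pr - Pr') := by
    rw [hlam']; exact CStarAlgebra.norm_mem_spectrum_of_nonneg hSnn
  have hbd : ∀ x ∈ spectrum ℝ (Pr * G * Pr - Pr'), 0 ≤ x ∧ x ≤ lam := by
    intro x hx
    have h1 : 0 ≤ x := spectrum_nonneg_of_nonneg hSnn hx
    have h2 : ‖x‖ ≤ ‖Pr * G * Pr - Pr'‖ := spectrum.norm_le_norm_of_mem hx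
    rw [Real.norm_of_nonneg h1, ← hlam'] at h2
    exact ⟨h1, h2⟩
  -- cfc computation
  have hcfc : cfc (fun x : ℝ => x - x * x) (Pr * G * Pr - Pr')
      = (Pr * G * Pr - Pr') - (Pr * G * Pr - Pr') * (Pr * G * Pr - Pr') := by
    rw [cfc_sub _ _ _, cfc_mul _ _ _, cfc_id' ℝ _]
  have hgreat := IsGreatest.norm_cfc (fun x : ℝ => x - x * x) (Pr * G * Pr - Pr')
  have hnorm : ‖(Pr * G * Pr - Pr') - (Pr * G * Pr - Pr') * (Pr * G * Pr - Pr')‖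
      = lam * (1 - lam) := by
    rw [← hcfc]
    refine hgreat.unique ⟨⟨lam, hmem, ?_⟩, ?_⟩
    · show ‖lam - lam * lam‖ = lam * (1 - lam)
      rw [Real.norm_of_nonneg (by nlinarith)]; ring
    · rintro y ⟨x, hx, rfl⟩
      obtain ⟨h1, h2⟩ := hbd x hx
      show ‖x - x * x‖ ≤ lam * (1 - lam)
      rw [Real.norm_of_nonneg (by nlinarith)]
      nlinarith
  -- conclude
  have hA : ‖(1 - Pr) * G * Pr‖ * ‖(1 - Pr) * G * Pr‖ = lam * (1 - lam) := by
    have h := CStarRing.norm_star_mul_self (x := (1 - Pr) * G * Pr)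
    rw [hAA, hnorm] at h
    exact h.symm
  have hc : ∀ f g : V →L[ℂ] V, f ∘L g = f * g := fun f g => rfl
  rw [hc, hc, ← mul_assoc, ← hA, Real.sqrt_mul_self (norm_nonneg _)]
end

section
/- Let 0 < λ ≤ 1/2 and μ = sqrt(λ(1-λ)). Let A be the N×N matrix with entries A_{ij} = λ μ^{i-j} for i ≥ j, A_{ij} = μ for i = j-1, and A_{ij} = 0 for i < j-1. Then the spectral radius of A is at most (1 + sqrt(1-λ))² λ. -/
open scoped ENNReal

/-!
Conjugation by `diag(r^j)` with `r = √λ + μ` does not change the spectrum, so by Gershgorin's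
theorem every eigenvalue is bounded by a weighted row sum `r^(-i) ∑_j A i j r^j`. Since
`r - μ = √λ`, the geometric sum gives `λ ∑_{j ≤ i} μ^(i-j) r^j ≤ √λ r^(i+1)`, and with the
superdiagonal term `μ r^(i+1)` the weighted row sum is at most `r^2`. Finally
`r^2 = λ (1 + √(1-λ))^2`.
-/

open Finset

namespace Matrix

variable {K n : Type*} [NormedField K] [Fintype n] [DecidableEq n]

theorem norm_le_of_mem_spectrum_of_forall_sum_norm_le {M : Matrix n n K} {R : ℝ}
    (hR : ∀ i, ∑ j, ‖M i j‖ ≤ R) {z : K} (hz : z ∈ spectrum K M) : ‖z‖ ≤ R := by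
  rw [← spectrum_toLin', ← Module.End.hasEigenvalue_iff_mem_spectrum] at hz
  obtain ⟨k, hk⟩ := eigenvalue_mem_ball hz
  rw [Metric.mem_closedBall, dist_eq_norm] at hk
  calc ‖z‖ ≤ ‖M k k‖ + ‖z - M k k‖ := norm_le_norm_add_norm_sub' z (M k k)
    _ ≤ ‖M k k‖ + ∑ j ∈ univ.erase k, ‖M k j‖ := by gcongr
    _ = ∑ j, ‖M k j‖ := add_sum_erase _ (fun j => ‖M k j‖) (mem_univ k)
    _ ≤ R := hR k

theorem spectrum_diagonal_inv_mul_mul_diagonal {w : n → K} (hw : ∀ i, w i ≠ 0)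
    (M : Matrix n n K) : spectrum K (diagonal w⁻¹ * M * diagonal w) = spectrum K M := by
  let u : (Matrix n n K)ˣ :=
    ⟨diagonal w, diagonal w⁻¹, by simp [diagonal_mul_diagonal, hw],
      by simp [diagonal_mul_diagonal, hw]⟩
  exact spectrum.units_conjugate' (u := u)

theorem spectralRadius_le_of_forall_weighted_sum_norm_le {M : Matrix n n K} {w : n → K}
    (hw : ∀ i, w i ≠ 0) {R : ℝ} (hR : ∀ i, ∑ j, ‖M i j‖ * ‖w j‖ ≤ R * ‖w i‖) :
    spectralRadius K M ≤ ENNReal.ofReal R := by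
  refine iSup₂_le fun z hz => ?_
  rw [← spectrum_diagonal_inv_mul_mul_diagonal hw] at hz
  refine (ofReal_norm z).symm.le.trans (ENNReal.ofReal_le_ofReal ?_)
  refine norm_le_of_mem_spectrum_of_forall_sum_norm_le (fun i => ?_) hz
  have hwi : 0 < ‖w i‖ := norm_pos_iff.2 (hw i)
  simp only [diagonal_mul, mul_diagonal, Pi.inv_apply, norm_mul, norm_inv, mul_assoc,
    ← mul_sum]
  rw [inv_mul_le_iff₀ hwi, mul_comm]
  exact hR i

end Matrix

def staircase (lam mu : ℝ) (i j : ℕ) : ℝ :=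
  if j ≤ i then lam * mu ^ (i - j) else if i + 1 = j then mu else 0

theorem staircase_nonneg {lam mu : ℝ} (hlam : 0 ≤ lam) (hmu : 0 ≤ mu) (i j : ℕ) :
    0 ≤ staircase lam mu i j := by
  unfold staircase
  split_ifs <;> positivity

theorem sq_mul_sum_pow_mul_pow_add_le {t mu : ℝ} (ht : 0 ≤ t) (hmu : 0 ≤ mu) (i : ℕ) :
    t ^ 2 * ∑ j ∈ range (i + 1), mu ^ (i - j) * (t + mu) ^ j + mu * (t + mu) ^ (i + 1)
      ≤ (t + mu) ^ (i + 2) := by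
  have hgeom := geom_sum₂_mul_add t mu (i + 1)
  simp only [Nat.add_sub_cancel, mul_comm ((t + mu) ^ _)] at hgeom
  have hsum : t * ∑ j ∈ range (i + 1), mu ^ (i - j) * (t + mu) ^ j ≤ (t + mu) ^ (i + 1) := by
    nlinarith [pow_nonneg hmu (i + 1)]
  calc t ^ 2 * ∑ j ∈ range (i + 1), mu ^ (i - j) * (t + mu) ^ j + mu * (t + mu) ^ (i + 1)
      = t * (t * ∑ j ∈ range (i + 1), mu ^ (i - j) * (t + mu) ^ j)
          + mu * (t + mu) ^ (i + 1) := by ring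
    _ ≤ t * (t + mu) ^ (i + 1) + mu * (t + mu) ^ (i + 1) := by gcongr
    _ = (t + mu) ^ (i + 2) := by ring

theorem sum_range_staircase_mul_pow_le {lam mu : ℝ} (hlam : 0 ≤ lam) (hmu : 0 ≤ mu)
    (N i : ℕ) :
    ∑ j ∈ range N, staircase lam mu i j * (√lam + mu) ^ j
      ≤ (√lam + mu) ^ 2 * (√lam + mu) ^ i := by
  set r := √lam + mu
  set f : ℕ → ℝ := fun j => staircase lam mu i j * r ^ j
  have hf_nonneg (j : ℕ) : 0 ≤ f j :=
    mul_nonneg (staircase_nonneg hlam hmu _ _) (by positivity)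
  have hf_support (j : ℕ) (hj : f j ≠ 0) : j < i + 2 := by
    contrapose! hj
    simp only [f, staircase]
    rw [if_neg (by omega), if_neg (by omega), zero_mul]
  calc ∑ j ∈ range N, f j = ∑ j ∈ (range N).filter (· < i + 2), f j :=
        (sum_filter_of_ne fun j _ => hf_support j).symm
    _ ≤ ∑ j ∈ range (i + 2), f j :=
        sum_le_sum_of_subset_of_nonneg (fun j hj => by simp at hj ⊢; omega)
          (fun j _ _ => hf_nonneg j)
    _ = √lam ^ 2 * ∑ j ∈ range (i + 1), mu ^ (i - j) * r ^ j + mu * r ^ (i + 1) := by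
        rw [sum_range_succ, Real.sq_sqrt hlam, mul_sum]
        congr 1
        · refine sum_congr rfl fun j hj => ?_
          simp only [f, staircase, if_pos (Nat.lt_succ_iff.1 (mem_range.1 hj))]
          ring
        · simp [f, staircase]
    _ ≤ r ^ (i + 2) := sq_mul_sum_pow_mul_pow_add_le (Real.sqrt_nonneg _) hmu i
    _ = r ^ 2 * r ^ i := by ring

theorem spectralRadius_staircase_le {N : ℕ} {lam mu : ℝ} (hlam : 0 < lam) (hmu : 0 ≤ mu)
    (A : Matrix (Fin N) (Fin N) ℝ) (hA : ∀ i j : Fin N, A i j = staircase lam mu i j) :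
    spectralRadius ℂ (A.map (fun x : ℝ => (x : ℂ))) ≤ ENNReal.ofReal ((√lam + mu) ^ 2) := by
  have hr : 0 < √lam + mu := by positivity
  have hw (j : Fin N) : ((√lam + mu : ℝ) : ℂ) ^ (j : ℕ) ≠ 0 :=
    pow_ne_zero _ (Complex.ofReal_ne_zero.2 hr.ne')
  refine Matrix.spectralRadius_le_of_forall_weighted_sum_norm_le hw fun i => ?_
  have hnorm (j : Fin N) : ‖((√lam + mu : ℝ) : ℂ) ^ (j : ℕ)‖ = (√lam + mu) ^ (j : ℕ) := by
    rw [norm_pow, Complex.norm_real, Real.norm_of_nonneg hr.le]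
  have hent (j : Fin N) : ‖A.map (fun x : ℝ => (x : ℂ)) i j‖ = staircase lam mu i j := by
    rw [Matrix.map_apply, Complex.norm_real, hA,
      Real.norm_of_nonneg (staircase_nonneg hlam.le hmu _ _)]
  simp only [hnorm, hent]
  rw [Fin.sum_univ_eq_sum_range (fun j => staircase lam mu i j * (√lam + mu) ^ j)]
  exact sum_range_staircase_mul_pow_le hlam.le hmu N i

theorem stmt_2_general {N : ℕ} (lam : ℝ) (hlam0 : 0 < lam)
    (mu : ℝ) (hmu : mu = Real.sqrt (lam * (1 - lam)))
    (A : Matrix (Fin N) (Fin N) ℝ)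
    (hA : ∀ i j : Fin N, A i j =
      if (j : ℕ) ≤ (i : ℕ) then lam * mu ^ ((i : ℕ) - (j : ℕ))
      else if (i : ℕ) + 1 = (j : ℕ) then mu else 0) :
    (⨆ μ' ∈ spectrum ℂ (A.map (fun x : ℝ => (x : ℂ))), (‖μ'‖₊ : ℝ≥0∞))
      ≤ ENNReal.ofReal ((1 + Real.sqrt (1 - lam)) ^ 2 * lam) := by
  have hr : (√lam + mu) ^ 2 = (1 + √(1 - lam)) ^ 2 * lam := by
    rw [hmu, Real.sqrt_mul hlam0.le]
    linear_combination (1 + √(1 - lam)) ^ 2 * Real.sq_sqrt hlam0.le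
  rw [← hr]
  exact spectralRadius_staircase_le hlam0 (hmu ▸ Real.sqrt_nonneg _) A hA

/-- Gershgorin-type bound on the spectral radius of the staircase
block matrix: `A i j = λ μ^(i-j)` for `i ≥ j`, `μ` for `i = j - 1`, `0` otherwise,
with `μ = √(λ(1-λ))`; then the spectral radius of `A` is at most `(1+√(1-λ))² λ`. -/
theorem stmt_2 {N : ℕ} (hN : 0 < N) (lam : ℝ) (hlam0 : 0 < lam) (hlam2 : lam ≤ 1 / 2)
    (mu : ℝ) (hmu : mu = Real.sqrt (lam * (1 - lam)))
    (A : Matrix (Fin N) (Fin N) ℝ)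
    (hA : ∀ i j : Fin N, A i j =
      if (j : ℕ) ≤ (i : ℕ) then lam * mu ^ ((i : ℕ) - (j : ℕ))
      else if (i : ℕ) + 1 = (j : ℕ) then mu else 0) :
    (⨆ μ' ∈ spectrum ℂ (A.map (fun x : ℝ => (x : ℂ))), (‖μ'‖₊ : ℝ≥0∞))
      ≤ ENNReal.ofReal ((1 + Real.sqrt (1 - lam)) ^ 2 * lam) :=
  stmt_2_general lam hlam0 mu hmu A hA
end

section
/- For any positive integers l ≤ t, each right coset of S_l in S_t contains a permutation ρ such that for every λ ∈ S_l, the minimal number of transpositions needed to write λρ equals the minimal number needed for ρ plus the minimal number needed for λ; i.e., |λρ| = |λ| + |ρ| for all λ ∈ S_l. -/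
/-! Writing `c(σ)` for the number of cycles of `σ`, fixed points included, `|σ| = t - c(σ)`:
multiplying by a transposition `(a b)` merges the cycles of `a` and `b` when they differ and splits
their common cycle otherwise. Take `ρ` with the most cycles in its coset. No two points below `l`
share a cycle of `ρ`, since `(a b) ρ` would have one more cycle. Build `λ ∈ S_l` from `1` by
transpositions that each merge two cycles; on the points below `l`, `λρ` has the same cycle
relation as `λ`, so each of them also merges two cycles of `λρ`, whence
`c(λρ) + t = c(λ) + c(ρ)`. -/

/-- Minimal number of transpositions whose product is `σ`. -/
noncomputable def transLen {t : ℕ} (σ : Equiv.Perm (Fin t)) : ℕ :=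
  sInf {n | ∃ L : List (Equiv.Perm (Fin t)),
    L.length = n ∧ (∀ τ ∈ L, τ.IsSwap) ∧ L.prod = σ}

open Set Function

theorem Nat.card_eq_card_add_one_of_injOn_compl {α β : Type*} [Finite α] {a b : α} {f : α → β}
    (hf : Surjective f) (hab : a ≠ b) (hfab : f a = f b) (hinj : InjOn f {b}ᶜ) :
    Nat.card α = Nat.card β + 1 := by
  have himage : f '' (univ \ {b}) = univ := by
    refine eq_univ_of_forall fun y => ?_
    obtain ⟨x, rfl⟩ := hf y
    by_cases hxb : x = b
    · exact ⟨a, ⟨mem_univ a, hab⟩, hxb ▸ hfab⟩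
    · exact ⟨x, ⟨mem_univ x, hxb⟩, rfl⟩
  have hinj' : InjOn f (univ \ {b}) := by rwa [← compl_eq_univ_sdiff]
  rw [← ncard_univ α, ← ncard_univ β, ← himage, hinj'.ncard_image,
    ncard_sdiff_singleton_add_one (mem_univ b)]

namespace Equiv.Perm

variable {α : Type*} {σ : Perm α} {a b x y : α} {s : Set α}

theorem SameCycle.mem_of_mapsTo [Finite α] (hs : MapsTo σ s s) (h : σ.SameCycle x y)
    (hx : x ∈ s) : y ∈ s := by
  obtain ⟨n, rfl⟩ := h.exists_nat_pow_eq
  exact hs.perm_pow n hx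

noncomputable def numCycles (σ : Perm α) : ℕ :=
  Nat.card (Quotient (SameCycle.setoid σ))

theorem numCycles_one : numCycles (1 : Perm α) = Nat.card α :=
  (Nat.card_eq_of_bijective _ ⟨fun _ _ h => sameCycle_one.mp (Quotient.exact h),
    Quotient.mk_surjective⟩).symm

section swap

variable [DecidableEq α] [Finite α]

theorem sameCycle_swap_mul_of_not_sameCycle (h : ¬σ.SameCycle a b) :
    (swap a b * σ).SameCycle a b := by
  set τ := swap a b * σ
  let s := {z | σ.SameCycle a z ∧ τ.SameCycle a z}
  have hs : MapsTo σ s s := by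
    rintro z ⟨hσz, hτz⟩
    refine ⟨sameCycle_apply_right.mpr hσz, ?_⟩
    by_cases hza : σ z = a
    · rw [hza]
    · have hzb : σ z ≠ b := fun hzb => h (hzb ▸ sameCycle_apply_right.mpr hσz)
      have : τ z = σ z := swap_apply_of_ne_of_ne hza hzb
      exact this ▸ hτz.trans ⟨1, by simp⟩
  have hpre : σ.symm a ∈ s :=
    (sameCycle_symm_apply_right.mpr (SameCycle.refl σ a)).mem_of_mapsTo hs
      ⟨SameCycle.rfl, SameCycle.rfl⟩
  exact hpre.2.trans ⟨1, by simp [τ]⟩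

theorem SameCycle.swap_mul_of_not_sameCycle (h : ¬σ.SameCycle a b) (hxy : σ.SameCycle x y) :
    (swap a b * σ).SameCycle x y := by
  set τ := swap a b * σ
  have hab : τ.SameCycle a b := sameCycle_swap_mul_of_not_sameCycle h
  have hstep : ∀ z, τ.SameCycle z (σ z) := by
    intro z
    have hτz : τ.SameCycle z (τ z) := ⟨1, by simp⟩
    by_cases hza : σ z = a
    · have : τ z = b := by simp [τ, hza]
      exact hza ▸ (this ▸ hτz).trans hab.symm
    by_cases hzb : σ z = b
    · have : τ z = a := by simp [τ, hzb]
      exact hzb ▸ (this ▸ hτz).trans hab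
    · simpa [τ, swap_apply_of_ne_of_ne hza hzb] using hτz
  exact hxy.mem_of_mapsTo (s := {z | τ.SameCycle x z}) (fun z hz => hz.trans (hstep z)) .rfl

theorem sameCycle_swap_mul_iff_of_not_sameCycle (h : ¬σ.SameCycle a b) :
    (swap a b * σ).SameCycle x y ↔ σ.SameCycle x y ∨ (σ.SameCycle x a ∧ σ.SameCycle b y) ∨
      (σ.SameCycle x b ∧ σ.SameCycle a y) := by
  set τ := swap a b * σ
  have hab : τ.SameCycle a b := sameCycle_swap_mul_of_not_sameCycle h
  refine ⟨fun hxy => ?_, ?_⟩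
  · by_cases hx : σ.SameCycle a x ∨ σ.SameCycle b x
    · have hU : MapsTo τ {z | σ.SameCycle a z ∨ σ.SameCycle b z}
          {z | σ.SameCycle a z ∨ σ.SameCycle b z} := by
        intro z hz
        have hσz : σ.SameCycle a (σ z) ∨ σ.SameCycle b (σ z) := by
          simpa only [sameCycle_apply_right] using (show σ.SameCycle a z ∨ σ.SameCycle b z from hz)
        show σ.SameCycle a (τ z) ∨ σ.SameCycle b (τ z)
        simp only [τ, Perm.mul_apply, swap_apply_def]
        split_ifs <;> first | exact hσz | exact .inl .rfl | exact .inr .rfl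
      have hy := hxy.mem_of_mapsTo hU hx
      rcases hx with hx | hx <;> rcases hy with hy | hy
      · exact .inl (hx.symm.trans hy)
      · exact .inr (.inl ⟨hx.symm, hy⟩)
      · exact .inr (.inr ⟨hx.symm, hy⟩)
      · exact .inl (hx.symm.trans hy)
    · push Not at hx
      refine .inl (hxy.mem_of_mapsTo (s := {z | σ.SameCycle x z}) (fun z hz => ?_) .rfl)
      have hza : σ z ≠ a := fun hza => hx.1 (hza ▸ (sameCycle_apply_right.mpr hz)).symm
      have hzb : σ z ≠ b := fun hzb => hx.2 (hzb ▸ (sameCycle_apply_right.mpr hz)).symm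
      simpa [τ, swap_apply_of_ne_of_ne hza hzb] using sameCycle_apply_right.mpr hz
  · rintro (hxy | ⟨hxa, hby⟩ | ⟨hxb, hay⟩)
    · exact hxy.swap_mul_of_not_sameCycle h
    · exact ((hxa.swap_mul_of_not_sameCycle h).trans hab).trans (hby.swap_mul_of_not_sameCycle h)
    · exact ((hxb.swap_mul_of_not_sameCycle h).trans hab.symm).trans
        (hay.swap_mul_of_not_sameCycle h)

theorem not_sameCycle_swap_mul_of_sameCycle (hab : a ≠ b) (h : σ.SameCycle a b) :
    ¬(swap a b * σ).SameCycle a b := by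
  have hex : ∃ k, (σ ^ k) a = b := h.exists_nat_pow_eq
  set k := Nat.find hex
  have hk : (σ ^ k) a = b := Nat.find_spec hex
  have hmin : ∀ i < k, (σ ^ i) a ≠ b := fun i hi => Nat.find_min hex hi
  have hk0 : 0 < k := Nat.pos_of_ne_zero fun h0 => hab (by simpa [h0] using hk)
  have hret : ∀ i, 0 < i → i < k → (σ ^ i) a ≠ a := fun i hi0 hik hia =>
    hmin (k - i) (by omega) <| by
      rw [← hk, ← hia, ← mul_apply, ← pow_add, Nat.sub_add_cancel hik.le, hia]
  intro hτ
  -- the orbit of `a` under `swap a b * σ` runs along `a, σ a, …, σ⁻¹ b` and then back to `a`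
  have hA : MapsTo (swap a b * σ) {z | ∃ i < k, (σ ^ i) a = z} {z | ∃ i < k, (σ ^ i) a = z} := by
    rintro _ ⟨i, hik, rfl⟩
    rw [mul_apply, ← mul_apply σ, ← pow_succ']
    rcases (show i + 1 ≤ k from hik).eq_or_lt with hlast | hlt
    · exact ⟨0, hk0, by rw [hlast, hk, swap_apply_right, pow_zero, one_apply]⟩
    · exact ⟨i + 1, hlt, (swap_apply_of_ne_of_ne (hret _ i.succ_pos hlt) (hmin _ hlt)).symm⟩
  obtain ⟨i, hik, hi⟩ := hτ.mem_of_mapsTo hA ⟨0, hk0, by simp⟩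
  exact hmin i hik hi

theorem numCycles_swap_mul_add_one_of_not_sameCycle (h : ¬σ.SameCycle a b) :
    numCycles (swap a b * σ) + 1 = numCycles σ := by
  let G : Quotient (SameCycle.setoid σ) → Quotient (SameCycle.setoid (swap a b * σ)) :=
    Quotient.map id fun _ _ => SameCycle.swap_mul_of_not_sameCycle h
  have hinj : InjOn G {⟦b⟧}ᶜ := by
    rintro ⟨x⟩ hx ⟨y⟩ hy hxy
    rcases (sameCycle_swap_mul_iff_of_not_sameCycle h).mp (Quotient.exact hxy) with
      hxy | ⟨-, hby⟩ | ⟨hxb, -⟩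
    · exact Quotient.sound hxy
    · exact absurd (Quotient.sound hby.symm) hy
    · exact absurd (Quotient.sound hxb) hx
  refine (Nat.card_eq_card_add_one_of_injOn_compl (f := G) (a := ⟦a⟧)
    (Quotient.map_surjective _ surjective_id) (fun hab => h (Quotient.exact hab))
    (Quotient.sound (sameCycle_swap_mul_of_not_sameCycle h)) hinj).symm

theorem numCycles_swap_mul_of_sameCycle (hab : a ≠ b) (h : σ.SameCycle a b) :
    numCycles (swap a b * σ) = numCycles σ + 1 := by
  have := numCycles_swap_mul_add_one_of_not_sameCycle (not_sameCycle_swap_mul_of_sameCycle hab h)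
  rwa [swap_mul_self_mul, eq_comm] at this

theorem numCycles_le_numCycles_swap_mul_add_one (hab : a ≠ b) (σ : Perm α) :
    numCycles σ ≤ numCycles (swap a b * σ) + 1 := by
  by_cases h : σ.SameCycle a b
  · rw [numCycles_swap_mul_of_sameCycle hab h]
    omega
  · exact (numCycles_swap_mul_add_one_of_not_sameCycle h).ge

end swap

section Fintype

variable [Fintype α] [DecidableEq α]

@[elab_as_elim]
theorem swap_mul_induction_on_merge {P : Perm α → Prop} (σ : Perm α) (one : P 1)
    (merge : ∀ σ a b, ¬σ.SameCycle a b → P σ → P (swap a b * σ)) : P σ := by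
  suffices ∀ n, ∀ σ : Perm α, σ.support.card = n → P σ from this _ σ rfl
  intro n
  induction n using Nat.strong_induction_on with
  | _ n ih =>
  intro σ hn
  by_cases hσ : σ = 1
  · exact hσ ▸ one
  obtain ⟨x, hx⟩ : ∃ x, σ x ≠ x := not_forall.mp fun h => hσ (Equiv.ext h)
  have hfix : IsFixedPt (swap x (σ x) * σ) x := by simp [IsFixedPt]
  rw [← swap_mul_self_mul x (σ x) σ]
  exact merge _ _ _ (fun h => hx (h.eq_of_left hfix).symm)
    (ih _ (hn ▸ card_support_swap_mul hx) _ rfl)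

@[elab_as_elim]
theorem swap_mul_induction_on_merge_of_fixed {S : Set α} {P : Perm α → Prop} (σ : Perm α)
    (hσ : ∀ x ∉ S, σ x = x) (one : P 1)
    (merge : ∀ σ a b, a ∈ S → b ∈ S → ¬σ.SameCycle a b → (∀ x ∉ S, σ x = x) → P σ →
      P (swap a b * σ)) : P σ := by
  refine swap_mul_induction_on_merge (P := fun σ => (∀ x ∉ S, σ x = x) → P σ) σ (fun _ => one)
    (fun σ a b h ih hfix => ?_) hσ
  have hσa : σ a ≠ b := fun hab => h ⟨1, by simpa using hab⟩
  have hσb : σ b ≠ a := fun hba => h (SameCycle.symm ⟨1, by simpa using hba⟩)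
  have ha : a ∈ S := by_contra fun ha => hσa (by simpa [swap_apply_eq_iff] using hfix a ha)
  have hb : b ∈ S := by_contra fun hb => hσb (by simpa [swap_apply_eq_iff] using hfix b hb)
  have hσS : ∀ x ∉ S, σ x = x := fun x hx => by
    simpa [swap_apply_eq_iff, swap_apply_of_ne_of_ne (ne_of_mem_of_not_mem ha hx).symm
      (ne_of_mem_of_not_mem hb hx).symm] using hfix x hx
  exact merge σ a b ha hb h hσS (ih hσS)

theorem exists_list_isSwap_prod_eq (σ : Perm α) : ∃ L : List (Perm α),
    (∀ τ ∈ L, τ.IsSwap) ∧ L.prod = σ ∧ L.length + numCycles σ = Nat.card α := by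
  induction σ using swap_mul_induction_on_merge with
  | one => exact ⟨[], by simp, by simp, by simp [numCycles_one]⟩
  | merge σ a b h ih =>
    obtain ⟨L, hL, hprod, hlen⟩ := ih
    have hab : a ≠ b := fun hab => h (hab ▸ SameCycle.rfl)
    have hcyc := numCycles_swap_mul_add_one_of_not_sameCycle h
    refine ⟨swap a b :: L, ?_, by rw [List.prod_cons, hprod], ?_⟩
    · exact List.forall_mem_cons.mpr ⟨⟨a, b, hab, rfl⟩, hL⟩
    · rw [List.length_cons]
      omega

theorem card_le_numCycles_prod_add_length {L : List (Perm α)} (hL : ∀ τ ∈ L, τ.IsSwap) :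
    Nat.card α ≤ numCycles L.prod + L.length := by
  induction L with
  | nil => simp [numCycles_one]
  | cons τ L ih =>
    obtain ⟨⟨a, b, hab, rfl⟩, hL'⟩ := List.forall_mem_cons.mp hL
    have := numCycles_le_numCycles_swap_mul_add_one hab L.prod
    rw [List.prod_cons, List.length_cons]
    linarith [ih hL']

variable {S : Set α} {ρ lam : Perm α}

theorem sameCycle_mul_iff_of_pairwise (hρ : S.Pairwise fun a b => ¬ρ.SameCycle a b)
    (hlam : ∀ x ∉ S, lam x = x) :
    ∀ x ∈ S, ∀ y ∈ S, ((lam * ρ).SameCycle x y ↔ lam.SameCycle x y) := by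
  refine swap_mul_induction_on_merge_of_fixed lam hlam (fun x hx y hy => ?_)
    (fun lam a b ha hb h _ ih x hx y hy => ?_)
  · rw [one_mul, sameCycle_one]
    exact ⟨fun hxy => by_contra fun hne => hρ hx hy hne hxy, fun hxy => hxy ▸ SameCycle.rfl⟩
  · have h' : ¬(lam * ρ).SameCycle a b := by rwa [ih a ha b hb]
    rw [mul_assoc, sameCycle_swap_mul_iff_of_not_sameCycle h',
      sameCycle_swap_mul_iff_of_not_sameCycle h, ih x hx y hy, ih x hx a ha, ih b hb y hy,
      ih x hx b hb, ih a ha y hy]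

theorem numCycles_mul_add_card_of_pairwise (hρ : S.Pairwise fun a b => ¬ρ.SameCycle a b)
    (hlam : ∀ x ∉ S, lam x = x) :
    numCycles (lam * ρ) + Nat.card α = numCycles lam + numCycles ρ := by
  refine swap_mul_induction_on_merge_of_fixed lam hlam ?_ (fun lam a b ha hb h hfix ih => ?_)
  · rw [one_mul, numCycles_one, add_comm]
  · have h' : ¬(lam * ρ).SameCycle a b := by
      rwa [sameCycle_mul_iff_of_pairwise hρ hfix a ha b hb]
    have := numCycles_swap_mul_add_one_of_not_sameCycle h
    have := numCycles_swap_mul_add_one_of_not_sameCycle h'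
    rw [mul_assoc]
    omega

theorem pairwise_not_sameCycle_of_forall_numCycles_mul_le
    (hmax : ∀ lam : Perm α, (∀ x ∉ S, lam x = x) → numCycles (lam * ρ) ≤ numCycles ρ) :
    S.Pairwise fun a b => ¬ρ.SameCycle a b := fun a ha b hb hab h => by
  have := hmax (swap a b) fun x hx =>
    swap_apply_of_ne_of_ne (ne_of_mem_of_not_mem ha hx).symm (ne_of_mem_of_not_mem hb hx).symm
  rw [numCycles_swap_mul_of_sameCycle hab h] at this
  omega

end Fintype

end Equiv.Perm

open Equiv Equiv.Perm

theorem transLen_add_numCycles {t : ℕ} (σ : Perm (Fin t)) : transLen σ + numCycles σ = t := by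
  obtain ⟨L, hL, hprod, hlen⟩ := exists_list_isSwap_prod_eq σ
  have hleast : IsLeast {n | ∃ L : List (Perm (Fin t)),
      L.length = n ∧ (∀ τ ∈ L, τ.IsSwap) ∧ L.prod = σ} L.length := by
    refine ⟨⟨L, rfl, hL, hprod⟩, ?_⟩
    rintro _ ⟨M, rfl, hM, rfl⟩
    have := card_le_numCycles_prod_add_length hM
    omega
  rw [transLen, hleast.csInf_eq]
  simpa using hlen

theorem stmt_3_general (l t : ℕ) (ρ₀ : Equiv.Perm (Fin t)) :
    ∃ ρ : Equiv.Perm (Fin t),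
      (∃ lam : Equiv.Perm (Fin t), (∀ i : Fin t, l ≤ (i : ℕ) → lam i = i) ∧ ρ = lam * ρ₀) ∧
      ∀ lam : Equiv.Perm (Fin t), (∀ i : Fin t, l ≤ (i : ℕ) → lam i = i) →
        transLen (lam * ρ) = transLen lam + transLen ρ := by
  classical
  let S : Set (Fin t) := {i | (i : ℕ) < l}
  have hS (lam : Perm (Fin t)) : (∀ i : Fin t, l ≤ (i : ℕ) → lam i = i) ↔ ∀ x ∉ S, lam x = x := by
    simp [S]
  obtain ⟨lam₀, hlam₀, hmax⟩ := Finset.exists_max_image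
    (Finset.univ.filter fun lam : Perm (Fin t) => ∀ x ∉ S, lam x = x)
    (fun lam => numCycles (lam * ρ₀)) ⟨1, by simp⟩
  refine ⟨lam₀ * ρ₀, ⟨lam₀, (hS _).2 (Finset.mem_filter.1 hlam₀).2, rfl⟩, fun lam hlam => ?_⟩
  have hρ : S.Pairwise fun a b => ¬(lam₀ * ρ₀).SameCycle a b :=
    pairwise_not_sameCycle_of_forall_numCycles_mul_le fun lam hlam => by
      rw [← mul_assoc]
      refine hmax _ (Finset.mem_filter.2 ⟨Finset.mem_univ _, fun x hx => ?_⟩)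
      rw [mul_apply, (Finset.mem_filter.1 hlam₀).2 x hx, hlam x hx]
  have := numCycles_mul_add_card_of_pairwise hρ ((hS lam).1 hlam)
  have := transLen_add_numCycles lam
  have := transLen_add_numCycles (lam₀ * ρ₀)
  have := transLen_add_numCycles (lam * (lam₀ * ρ₀))
  rw [Nat.card_eq_fintype_card, Fintype.card_fin] at *
  omega

/-- Coset decomposition. For `l ≤ t`, each right coset of `S_l`
(the subgroup of permutations fixing all points with index `≥ l`) in `S_t`
contains a minimal representative `ρ` with `|λρ| = |λ| + |ρ|` for all `λ ∈ S_l`. -/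
theorem stmt_3 (l t : ℕ) (hl : 0 < l) (hlt : l ≤ t) (ρ₀ : Equiv.Perm (Fin t)) :
    ∃ ρ : Equiv.Perm (Fin t),
      (∃ lam : Equiv.Perm (Fin t), (∀ i : Fin t, l ≤ (i : ℕ) → lam i = i) ∧ ρ = lam * ρ₀) ∧
      ∀ lam : Equiv.Perm (Fin t), (∀ i : Fin t, l ≤ (i : ℕ) → lam i = i) →
        transLen (lam * ρ) = transLen lam + transLen ρ :=
  stmt_3_general l t ρ₀
end

section
/- The derangement polynomial d_t(x) = ∑_{σ derangement in S_t} ∑_{τ ∈ S_t} x^{|σ^{-1}τ| + |τ|} satisfies the closed-form expression d_t(x) = (-1)^t ∑_{k=0}^{t} (-1)^k binom(t,k) ∏_{ℓ=k+1}^{t} (1 + (ℓ-1)x²) ∏_{ℓ=1}^{k} (1 + (ℓ-1)x)². -/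
/-- The derangement polynomial
`d_t(x) = ∑_{σ derangement in S_t} ∑_{τ ∈ S_t} x^{|σ⁻¹τ| + |τ|}`. -/
noncomputable def dpoly (k : ℕ) (x : ℝ) : ℝ :=
  ∑ σ ∈ Finset.univ.filter (fun σ : Equiv.Perm (Fin k) => ∀ i, σ i ≠ i),
    ∑ τ : Equiv.Perm (Fin k), x ^ (transLen (σ⁻¹ * τ) + transLen τ)

open Equiv Equiv.Perm Finset

namespace DerangementPolynomial

lemma swap_mul_swap_eq_swap_mul_swap {α : Type*} [DecidableEq α] {a b c : α} (hba : b ≠ a)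
    (hbc : b ≠ c) : swap a b * swap a c = swap a c * swap b c := by
  rw [swap_comm b c, ← swap_mul_swap_mul_swap hba hbc, ← mul_assoc, ← mul_assoc, swap_mul_self,
    one_mul, swap_comm b a]

def fixZero {n : ℕ} : Perm (Fin n) →* Perm (Fin (n + 1)) where
  toFun e := decomposeFin.symm (0, e)
  map_one' := by rw [decomposeFin_symm_of_one, swap_self, Perm.one_def]
  map_mul' e f := by
    ext i
    cases i using Fin.cases <;> simp [decomposeFin_symm_apply_succ]

@[simp] lemma fixZero_apply_zero {n : ℕ} (e : Perm (Fin n)) : fixZero e 0 = 0 :=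
  decomposeFin_symm_apply_zero 0 e

@[simp] lemma fixZero_apply_succ {n : ℕ} (e : Perm (Fin n)) (i : Fin n) :
    fixZero e i.succ = (e i).succ := by
  simp [fixZero, decomposeFin_symm_apply_succ]

lemma fixZero_apply_eq_zero_iff {n : ℕ} (e : Perm (Fin n)) {p : Fin (n + 1)} :
    fixZero e p = 0 ↔ p = 0 := by
  rw [← fixZero_apply_zero e, (fixZero e).apply_eq_iff_eq, fixZero_apply_zero]

lemma fixZero_swap {n : ℕ} (a b : Fin n) : fixZero (swap a b) = swap a.succ b.succ := by
  ext i
  cases i using Fin.cases with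
  | zero => simp [swap_apply_of_ne_of_ne (Fin.succ_ne_zero a).symm (Fin.succ_ne_zero b).symm]
  | succ i => simp [swap_apply_def, apply_ite Fin.succ]

lemma decomposeFin_symm_eq {n : ℕ} (p : Fin (n + 1)) (e : Perm (Fin n)) :
    decomposeFin.symm (p, e) = swap 0 p * fixZero e := by
  ext i
  cases i using Fin.cases with
  | zero => simp [decomposeFin_symm_apply_zero]
  | succ i => simp [decomposeFin_symm_apply_succ]

lemma exists_eq_swap_mul_fixZero {n : ℕ} (σ : Perm (Fin (n + 1))) :
    ∃ p e, σ = swap 0 p * fixZero e :=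
  ⟨_, _, by rw [← decomposeFin_symm_eq, Prod.mk.eta, Equiv.symm_apply_apply]⟩

lemma fixZero_mul_swap_zero {n : ℕ} (g : Perm (Fin n)) (p : Fin (n + 1)) :
    fixZero g * swap 0 p = swap 0 (fixZero g p) * fixZero g := by
  rw [mul_swap_eq_swap_mul, fixZero_apply_zero]

-- `n` minus the number of cycles, computed along `σ = swap 0 p * fixZero e`
def decompLen : ∀ {n : ℕ}, Perm (Fin n) → ℕ
  | 0, _ => 0
  | _ + 1, σ => (if (decomposeFin σ).1 = 0 then 0 else 1) + decompLen (decomposeFin σ).2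

lemma decompLen_swap_mul_fixZero {n : ℕ} (p : Fin (n + 1)) (e : Perm (Fin n)) :
    decompLen (swap 0 p * fixZero e) = (if p = 0 then 0 else 1) + decompLen e := by
  rw [← decomposeFin_symm_eq, decompLen, Equiv.apply_symm_apply]

lemma decompLen_fixZero {n : ℕ} (e : Perm (Fin n)) : decompLen (fixZero e) = decompLen e := by
  simpa [← Perm.one_def] using decompLen_swap_mul_fixZero 0 e

lemma decompLen_swap_mul_le {n : ℕ} (σ : Perm (Fin n)) {a b : Fin n} (hab : a ≠ b) :
    decompLen (swap a b * σ) ≤ decompLen σ + 1 := by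
  induction n with
  | zero => exact a.elim0
  | succ n ih =>
    obtain ⟨p, e, rfl⟩ := exists_eq_swap_mul_fixZero σ
    have swap_zero : ∀ k : Fin n,
        decompLen (swap 0 k.succ * (swap 0 p * fixZero e)) ≤
          decompLen (swap 0 p * fixZero e) + 1 := by
      intro k
      rcases Fin.eq_zero_or_eq_succ p with rfl | ⟨q, rfl⟩
      · simp [← Perm.one_def, decompLen_swap_mul_fixZero, decompLen_fixZero, add_comm]
      rcases eq_or_ne k q with rfl | hkq
      · rw [← mul_assoc, swap_mul_self, one_mul, decompLen_fixZero, decompLen_swap_mul_fixZero]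
        omega
      · rw [← mul_assoc, swap_mul_swap_eq_swap_mul_swap (Fin.succ_ne_zero k)
          (Fin.succ_inj.not.mpr hkq), ← fixZero_swap, mul_assoc, ← map_mul]
        simp only [decompLen_swap_mul_fixZero, Fin.succ_ne_zero, if_false]
        have := ih e hkq
        omega
    cases a using Fin.cases with
    | zero =>
      obtain ⟨k, rfl⟩ := Fin.exists_succ_eq.mpr hab.symm
      exact swap_zero k
    | succ i =>
      cases b using Fin.cases with
      | zero => rw [swap_comm]; exact swap_zero i
      | succ k =>
        rw [← fixZero_swap, ← mul_assoc, fixZero_mul_swap_zero, mul_assoc, ← map_mul]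
        simp only [decompLen_swap_mul_fixZero, fixZero_apply_eq_zero_iff]
        have := ih e (Fin.succ_inj.not.mp hab)
        omega

lemma decompLen_one (n : ℕ) : decompLen (1 : Perm (Fin n)) = 0 := by
  induction n with
  | zero => rfl
  | succ n ih => rw [← map_one fixZero, decompLen_fixZero, ih]

lemma decompLen_list_prod_le {n : ℕ} (L : List (Perm (Fin n))) (hL : ∀ τ ∈ L, τ.IsSwap) :
    decompLen L.prod ≤ L.length := by
  induction L with
  | nil => exact (decompLen_one n).le
  | cons τ L ih =>
    obtain ⟨a, b, hab, rfl⟩ := hL τ List.mem_cons_self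
    rw [List.prod_cons, List.length_cons]
    have := ih fun τ hτ => hL τ (List.mem_cons_of_mem _ hτ)
    have := decompLen_swap_mul_le L.prod hab
    omega

lemma exists_isSwap_list_length_eq {n : ℕ} (σ : Perm (Fin n)) :
    ∃ L : List (Perm (Fin n)), L.length = decompLen σ ∧ (∀ τ ∈ L, τ.IsSwap) ∧ L.prod = σ := by
  induction n with
  | zero => exact ⟨[], rfl, by simp, Subsingleton.elim _ _⟩
  | succ n ih =>
    obtain ⟨p, e, rfl⟩ := exists_eq_swap_mul_fixZero σ
    obtain ⟨L, hlen, hswap, rfl⟩ := ih e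
    have hmap : ∀ τ ∈ L.map fixZero, τ.IsSwap := by
      simp only [List.mem_map]
      rintro _ ⟨τ, hτ, rfl⟩
      obtain ⟨a, b, hab, rfl⟩ := hswap τ hτ
      exact ⟨a.succ, b.succ, Fin.succ_inj.not.mpr hab, fixZero_swap a b⟩
    rw [decompLen_swap_mul_fixZero, map_list_prod]
    rcases eq_or_ne p 0 with rfl | hp
    · exact ⟨L.map fixZero, by simp [hlen], hmap, by simp [← Perm.one_def]⟩
    · refine ⟨swap 0 p :: L.map fixZero, by simp [hp, hlen, add_comm], ?_, by simp⟩
      exact List.forall_mem_cons.mpr ⟨⟨0, p, hp.symm, rfl⟩, hmap⟩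

lemma transLen_eq_decompLen {n : ℕ} (σ : Perm (Fin n)) : transLen σ = decompLen σ := by
  obtain ⟨L, hlen, hswap, hprod⟩ := exists_isSwap_list_length_eq σ
  refine le_antisymm (Nat.sInf_le ⟨L, hlen, hswap, hprod⟩) (le_csInf ⟨_, L, hlen, hswap, hprod⟩ ?_)
  rintro _ ⟨M, rfl, hM, rfl⟩
  exact decompLen_list_prod_le M hM

lemma transLen_fixZero {n : ℕ} (e : Perm (Fin n)) : transLen (fixZero e) = transLen e := by
  simp only [transLen_eq_decompLen, decompLen_fixZero]

lemma transLen_swap_succ_mul_fixZero {n : ℕ} (i : Fin n) (e : Perm (Fin n)) :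
    transLen (swap 0 i.succ * fixZero e) = transLen e + 1 := by
  simp [transLen_eq_decompLen, decompLen_swap_mul_fixZero, add_comm]

lemma decompLen_conj_le {n : ℕ} (g σ : Perm (Fin n)) : decompLen (g * σ * g⁻¹) ≤ decompLen σ := by
  obtain ⟨L, hlen, hswap, rfl⟩ := exists_isSwap_list_length_eq σ
  rw [← hlen, ← MulAut.conj_apply, map_list_prod]
  refine (decompLen_list_prod_le _ ?_).trans (List.length_map _).le
  simp only [List.mem_map]
  rintro _ ⟨τ, hτ, rfl⟩
  obtain ⟨a, b, hab, rfl⟩ := hswap τ hτ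
  exact ⟨g a, g b, g.injective.ne hab, (swap_apply_apply g a b).symm⟩

lemma transLen_conj {n : ℕ} (g σ : Perm (Fin n)) : transLen (g * σ * g⁻¹) = transLen σ := by
  simp only [transLen_eq_decompLen]
  refine le_antisymm (decompLen_conj_le g σ) ?_
  simpa [mul_assoc] using decompLen_conj_le g⁻¹ (g * σ * g⁻¹)

lemma sum_perm_fin_succ {M : Type*} [AddCommMonoid M] {n : ℕ} (f : Perm (Fin (n + 1)) → M) :
    ∑ σ, f σ = ∑ e, f (fixZero e) + ∑ i : Fin n, ∑ e, f (swap 0 i.succ * fixZero e) := by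
  rw [← decomposeFin.symm.sum_comp, Fintype.sum_prod_type, Fin.sum_univ_succ]
  simp [decomposeFin_symm_eq, ← Perm.one_def]

lemma sum_filter_and_apply_zero_eq_zero {M : Type*} [AddCommMonoid M] {n : ℕ}
    (P : Perm (Fin (n + 1)) → Prop) [DecidablePred P] (f : Perm (Fin (n + 1)) → M) :
    ∑ σ ∈ univ.filter (fun σ => P σ ∧ σ 0 = 0), f σ =
      ∑ e ∈ univ.filter (fun e => P (fixZero e)), f (fixZero e) := by
  simp [sum_filter, sum_perm_fin_succ, Perm.mul_apply]

section

variable (x : ℝ)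

def cProd (k : ℕ) (y : ℝ) : ℝ := ∏ ℓ ∈ range k, (1 + ℓ * y)

lemma sum_pow_transLen (n : ℕ) : ∑ σ : Perm (Fin n), x ^ transLen σ = cProd n x := by
  induction n with
  | zero => simp [transLen_eq_decompLen, decompLen, cProd]
  | succ n ih =>
    simp only [sum_perm_fin_succ, transLen_fixZero, transLen_swap_succ_mul_fixZero, pow_succ,
      ← sum_mul, ih, sum_const, card_univ, Fintype.card_fin, nsmul_eq_mul, cProd, prod_range_succ]
    ring

noncomputable def pairWeight {n : ℕ} (σ : Perm (Fin n)) : ℝ :=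
  ∑ τ, x ^ (transLen (σ⁻¹ * τ) + transLen τ)

lemma sum_pairWeight (n : ℕ) : ∑ σ : Perm (Fin n), pairWeight x σ = cProd n x ^ 2 := by
  have hshift : ∀ τ : Perm (Fin n), ∑ σ : Perm (Fin n), x ^ transLen (σ⁻¹ * τ) = cProd n x :=
    fun τ => ((Equiv.inv _).trans (Equiv.mulRight τ)).sum_comp (fun σ => x ^ transLen σ) |>.trans
      (sum_pow_transLen x n)
  simp only [pairWeight, pow_add]
  rw [sum_comm]
  simp only [← sum_mul, hshift, ← mul_sum, sum_pow_transLen, sq]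

lemma pairWeight_conj {n : ℕ} (g σ : Perm (Fin n)) :
    pairWeight x (g * σ * g⁻¹) = pairWeight x σ := by
  unfold pairWeight
  rw [← (MulAut.conj g).toEquiv.sum_comp]
  refine sum_congr rfl fun τ _ => ?_
  have : (g * σ * g⁻¹)⁻¹ * (g * τ * g⁻¹) = g * (σ⁻¹ * τ) * g⁻¹ := by group
  simp only [MulEquiv.toEquiv_eq_coe, MulEquiv.coe_toEquiv, MulAut.conj_apply, this, transLen_conj]

lemma pairWeight_fixZero {n : ℕ} (σ : Perm (Fin n)) :
    pairWeight x (fixZero σ) = (1 + n * x ^ 2) * pairWeight x σ := by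
  have hswap : ∀ (i : Fin n) (e : Perm (Fin n)), fixZero σ⁻¹ * (swap 0 i.succ * fixZero e) =
      swap 0 (σ⁻¹ i).succ * fixZero (σ⁻¹ * e) := by
    intro i e
    rw [← mul_assoc, fixZero_mul_swap_zero, fixZero_apply_succ, mul_assoc, ← map_mul]
  unfold pairWeight
  simp only [sum_perm_fin_succ, ← map_inv, hswap, ← map_mul, transLen_fixZero,
    transLen_swap_succ_mul_fixZero]
  simp only [show ∀ a b : ℕ, x ^ (a + 1 + (b + 1)) = x ^ 2 * x ^ (a + b) from
    fun a b => by ring, ← mul_sum, sum_const, card_univ, Fintype.card_fin, nsmul_eq_mul]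
  ring

noncomputable def sumNoFixedBelow (n j : ℕ) : ℝ :=
  ∑ σ ∈ univ.filter (fun σ : Perm (Fin n) => ∀ i : Fin n, (i : ℕ) < j → σ i ≠ i), pairWeight x σ

lemma sumNoFixedBelow_zero (n : ℕ) : sumNoFixedBelow x n 0 = cProd n x ^ 2 := by
  simp [sumNoFixedBelow, sum_pairWeight]

lemma finRotate_castSucc {n : ℕ} (i : Fin n) : finRotate (n + 1) i.castSucc = i.succ := by
  ext
  rw [coe_finRotate_of_ne_last (Fin.castSucc_ne_last i)]
  simp

lemma sum_noFixedSucc_eq_sumNoFixedBelow {n j : ℕ} (hj : j ≤ n) :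
    ∑ σ ∈ univ.filter
        (fun σ : Perm (Fin (n + 1)) => ∀ i : Fin n, (i : ℕ) < j → σ i.succ ≠ i.succ),
      pairWeight x σ = sumNoFixedBelow x (n + 1) j := by
  -- conjugating by the rotation `i ↦ i + 1` carries `0, …, j-1` to `1, …, j`
  refine (sum_equiv (MulAut.conj (finRotate (n + 1))).toEquiv (fun σ => ?_)
    fun σ _ => (pairWeight_conj x _ σ).symm).symm
  have hrot : ∀ i : Fin n, (finRotate (n + 1)).symm i.succ = i.castSucc := fun i =>
    (Equiv.symm_apply_eq _).mpr (finRotate_castSucc i).symm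
  simp only [mem_filter, mem_univ, true_and, MulEquiv.toEquiv_eq_coe, MulEquiv.coe_toEquiv,
    MulAut.conj_apply, Perm.mul_apply, Perm.inv_def, hrot]
  simp only [← finRotate_castSucc, EmbeddingLike.apply_eq_iff_eq, ne_eq]
  rw [Fin.forall_fin_succ']
  simp [hj.not_gt]

lemma sumNoFixedBelow_succ_succ {n j : ℕ} (hj : j ≤ n) :
    sumNoFixedBelow x (n + 1) (j + 1) =
      sumNoFixedBelow x (n + 1) j - (1 + n * x ^ 2) * sumNoFixedBelow x n j := by
  rw [← sum_noFixedSucc_eq_sumNoFixedBelow x hj,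
    ← sum_filter_not_add_sum_filter _ (fun σ => σ 0 = 0), filter_filter, filter_filter,
    sum_filter_and_apply_zero_eq_zero]
  have hfixed : ∑ e ∈ univ.filter (fun e : Perm (Fin n) =>
      ∀ i : Fin n, (i : ℕ) < j → fixZero e i.succ ≠ i.succ), pairWeight x (fixZero e) =
        (1 + n * x ^ 2) * sumNoFixedBelow x n j := by
    simp only [fixZero_apply_succ, ne_eq, Fin.succ_inj, pairWeight_fixZero, sumNoFixedBelow,
      mul_sum]
  rw [hfixed, add_sub_cancel_right, sumNoFixedBelow]
  refine sum_congr (filter_congr fun σ _ => ?_) fun _ _ => rfl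
  rw [Fin.forall_fin_succ]
  simp [and_comm]

lemma dpoly_eq_sumNoFixedBelow (t : ℕ) : dpoly t x = sumNoFixedBelow x t t := by
  unfold dpoly sumNoFixedBelow pairWeight
  simp

lemma cProd_sq_pos (k : ℕ) : 0 < cProd k (x ^ 2) :=
  prod_pos fun _ _ => by positivity

noncomputable def cRatio (k : ℕ) : ℝ := cProd k x ^ 2 / cProd k (x ^ 2)

lemma sumNoFixedBelow_eq_fwdDiff_iter (m j : ℕ) :
    sumNoFixedBelow x (m + j) j = cProd (m + j) (x ^ 2) * (fwdDiff 1)^[j] (cRatio x) m := by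
  induction j generalizing m with
  | zero =>
    rw [add_zero, sumNoFixedBelow_zero, Function.iterate_zero_apply, cRatio,
      mul_div_cancel₀ _ (cProd_sq_pos x m).ne']
  | succ j ih =>
    rw [← add_assoc, sumNoFixedBelow_succ_succ x (Nat.le_add_left j m), Nat.add_right_comm m j 1,
      ih, ih, Function.iterate_succ_apply', fwdDiff, Nat.add_right_comm m 1 j, cProd, cProd,
      prod_range_succ]
    push_cast
    ring

lemma cProd_mul_fwdDiff_iter_cRatio_zero (t : ℕ) :
    cProd t (x ^ 2) * (fwdDiff 1)^[t] (cRatio x) 0 = (-1 : ℝ) ^ t * ∑ k ∈ range (t + 1),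
      (-1 : ℝ) ^ k * (t.choose k : ℝ) * (∏ ℓ ∈ Ico k t, (1 + (ℓ : ℝ) * x ^ 2)) * cProd k x ^ 2 := by
  rw [fwdDiff_iter_eq_sum_shift, mul_sum, mul_sum]
  refine sum_congr rfl fun k hk => ?_
  have hkt : k ≤ t := Nat.lt_succ_iff.mp (mem_range.mp hk)
  have hsplit : cProd t (x ^ 2) = cProd k (x ^ 2) * ∏ ℓ ∈ Ico k t, (1 + (ℓ : ℝ) * x ^ 2) :=
    (prod_range_mul_prod_Ico _ hkt).symm
  have hsign : (-1 : ℝ) ^ (t - k) = (-1) ^ t * (-1) ^ k := by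
    obtain ⟨d, rfl⟩ := Nat.exists_eq_add_of_le hkt
    rw [Nat.add_sub_cancel_left, pow_add, mul_right_comm, ← pow_add, ← two_mul, pow_mul,
      neg_one_sq, one_pow, one_mul]
  rw [zsmul_eq_mul, hsplit, cRatio, zero_add, smul_eq_mul, mul_one]
  push_cast
  rw [hsign]
  field_simp [(cProd_sq_pos x k).ne']

end

end DerangementPolynomial

/-- closed form of the derangement polynomial:
`d_t(x) = (-1)^t ∑_{k=0}^{t} (-1)^k C(t,k) ∏_{ℓ=k+1}^{t}(1+(ℓ-1)x²) ∏_{ℓ=1}^{k}(1+(ℓ-1)x)²`. -/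
theorem stmt_6 (t : ℕ) (x : ℝ) :
    dpoly t x
      = (-1 : ℝ) ^ t * ∑ k ∈ Finset.range (t + 1),
          (-1 : ℝ) ^ k * (t.choose k : ℝ)
            * (∏ ℓ ∈ Finset.Ico k t, (1 + (ℓ : ℝ) * x ^ 2))
            * (∏ ℓ ∈ Finset.range k, (1 + (ℓ : ℝ) * x)) ^ 2 := by
  have h := DerangementPolynomial.sumNoFixedBelow_eq_fwdDiff_iter x 0 t
  rw [zero_add] at h
  rw [DerangementPolynomial.dpoly_eq_sumNoFixedBelow, h,
    DerangementPolynomial.cProd_mul_fwdDiff_iter_cRatio_zero]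
  rfl
end

section
/- Let 0 < λ < 1 and define f(λ) = (1 + sqrt(1-λ))² λ. Then f(λ) < 1 if and only if λ < λ*, where λ* = (1/3)[2^{1/3}(13 + 3√33)^{1/3} − 2^{8/3}(13 + 3√33)^{−1/3} − 1] ≈ 0.2956 is the unique root in (0,1) of the equation (1+sqrt(1-λ))²λ = 1. Moreover, for 0 < λ ≤ λ*, one has 3.382 < (1 + sqrt(1-λ))² < 4. -/
/-!
With `s = √(1 - λ)` one has `f(λ) - 1 = s (2λ - s³)` and `(2λ - s³)(2λ + s³) = 4λ² - (1 - λ)³`,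
which is the cubic `p(λ) = λ³ + λ² + 3λ - 1`. Hence on `[0, 1)` the sign of `f(λ) - 1` is the sign
of `p(λ)`. Since `p' > 0`, `p` is strictly increasing with a single real root, and Cardano's formula
for that root is exactly `λ*`. Finally `λ* < 0.2959` gives `√(1 - λ) > 0.8391` for `λ ≤ λ*`, whence
`(1 + √(1 - λ))² > 1.8391² > 3.382`.
-/

open Real

def thresholdCubic (x : ℝ) : ℝ := x ^ 3 + x ^ 2 + 3 * x - 1

lemma thresholdCubic_strictMono : StrictMono thresholdCubic := by
  intro x y hxy
  unfold thresholdCubic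
  nlinarith [sq_nonneg (x + y), sq_nonneg (x - y), sq_nonneg (x + y + 1),
    mul_pos (sub_pos.mpr hxy) (sub_pos.mpr hxy)]

lemma one_add_sqrt_one_sub_sq_mul_sub_one_mul {l : ℝ} (hl : l ≤ 1) :
    ((1 + √(1 - l)) ^ 2 * l - 1) * (√(1 - l) ^ 3 + 2 * l) = √(1 - l) * thresholdCubic l := by
  generalize hs : √(1 - l) = s
  obtain rfl : l = 1 - s ^ 2 := by
    rw [← hs, sq_sqrt (by linarith)]
    ring
  unfold thresholdCubic
  ring

lemma sign_one_add_sqrt_one_sub_sq_mul_sub_one {l : ℝ} (hl₀ : 0 ≤ l) (hl₁ : l < 1) :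
    SignType.sign ((1 + √(1 - l)) ^ 2 * l - 1) = SignType.sign (thresholdCubic l) := by
  have hs : 0 < √(1 - l) := sqrt_pos.mpr (by linarith)
  have hc : 0 < √(1 - l) ^ 3 + 2 * l := by positivity
  have h := congrArg SignType.sign (one_add_sqrt_one_sub_sq_mul_sub_one_mul hl₁.le)
  rwa [sign_mul, sign_mul, sign_pos hc, sign_pos hs, mul_one, one_mul] at h

lemma one_add_sqrt_one_sub_sq_mul_lt_one_iff {l : ℝ} (hl₀ : 0 ≤ l) (hl₁ : l < 1) :
    (1 + √(1 - l)) ^ 2 * l < 1 ↔ thresholdCubic l < 0 := by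
  rw [← sub_neg, ← sign_eq_neg_one_iff, sign_one_add_sqrt_one_sub_sq_mul_sub_one hl₀ hl₁,
    sign_eq_neg_one_iff]

lemma one_add_sqrt_one_sub_sq_mul_eq_one_iff {l : ℝ} (hl₀ : 0 ≤ l) (hl₁ : l < 1) :
    (1 + √(1 - l)) ^ 2 * l = 1 ↔ thresholdCubic l = 0 := by
  rw [← sub_eq_zero, ← _root_.sign_eq_zero_iff,
    sign_one_add_sqrt_one_sub_sq_mul_sub_one hl₀ hl₁, _root_.sign_eq_zero_iff]

lemma two_rpow_mul_rpow_sub_eq {c : ℝ} (hc : 0 < c) :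
    (2 : ℝ) ^ ((1 : ℝ) / 3) * c ^ ((1 : ℝ) / 3) - (2 : ℝ) ^ ((8 : ℝ) / 3) * c ^ (-(1 : ℝ) / 3)
      = (2 * c) ^ ((1 : ℝ) / 3) - 8 / (2 * c) ^ ((1 : ℝ) / 3) := by
  rw [← mul_rpow zero_le_two hc.le, show (8 : ℝ) / 3 = 3 + -(1 : ℝ) / 3 by norm_num,
    rpow_add two_pos, mul_assoc, ← mul_rpow zero_le_two hc.le, neg_div,
    rpow_neg (by positivity)]
  norm_num [div_eq_mul_inv]

/-- `u³ = 26 + 6√33` and `(8/u)³ = 6√33 - 26`, so `v = u - 8/u` solves `v³ + 24v = 52`, which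
is `27 p((v - 1)/3) = 0`. -/
lemma thresholdCubic_cardano :
    thresholdCubic ((1 / 3) * ((2 : ℝ) ^ ((1 : ℝ) / 3) * (13 + 3 * √33) ^ ((1 : ℝ) / 3)
      - (2 : ℝ) ^ ((8 : ℝ) / 3) * (13 + 3 * √33) ^ (-(1 : ℝ) / 3) - 1)) = 0 := by
  have hc : (0 : ℝ) < 13 + 3 * √33 := by positivity
  rw [sub_eq_add_neg _ (1 : ℝ), two_rpow_mul_rpow_sub_eq hc]
  set u := (2 * (13 + 3 * √33)) ^ ((1 : ℝ) / 3)
  have hu : 0 < u := by positivity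
  have hu3 : u ^ 3 = 26 + 6 * √33 := by
    rw [← rpow_natCast, ← rpow_mul (by positivity)]
    norm_num
    ring
  have h33 : √33 ^ 2 = 33 := sq_sqrt (by norm_num)
  have hv : (u - 8 / u) ^ 3 + 24 * (u - 8 / u) = 52 := by
    field_simp
    linear_combination (u ^ 3 - 26 + 6 * √33) * hu3 + 36 * h33
  unfold thresholdCubic
  linear_combination hv / 27

lemma pos_and_lt_of_thresholdCubic_eq_zero {r : ℝ} (hr : thresholdCubic r = 0) :
    0 < r ∧ r < 0.2959 := by
  constructor
  · refine thresholdCubic_strictMono.lt_iff_lt.mp ?_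
    rw [hr]
    norm_num [thresholdCubic]
  · refine thresholdCubic_strictMono.lt_iff_lt.mp ?_
    rw [hr]
    norm_num [thresholdCubic]

lemma one_add_sqrt_one_sub_sq_bounds {l : ℝ} (hl₀ : 0 < l) (hl : l < 0.2959) :
    3.382 < (1 + √(1 - l)) ^ 2 ∧ (1 + √(1 - l)) ^ 2 < 4 := by
  have hlow : (0.8391 : ℝ) < √(1 - l) := (lt_sqrt (by norm_num)).mpr (by linarith)
  have hup : √(1 - l) < 1 := (sqrt_lt' one_pos).mpr (by linarith)
  constructor <;> nlinarith

/-- properties of `f(λ) = (1+√(1-λ))²λ` and the threshold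
`λ* = (1/3)[2^{1/3}(13+3√33)^{1/3} − 2^{8/3}(13+3√33)^{−1/3} − 1]`. -/
theorem stmt_10
    (f : ℝ → ℝ) (hf : ∀ l, f l = (1 + Real.sqrt (1 - l)) ^ 2 * l)
    (lstar : ℝ)
    (hstar : lstar = (1 / 3) * ((2 : ℝ) ^ ((1 : ℝ) / 3) * (13 + 3 * Real.sqrt 33) ^ ((1 : ℝ) / 3)
      - (2 : ℝ) ^ ((8 : ℝ) / 3) * (13 + 3 * Real.sqrt 33) ^ (-(1 : ℝ) / 3) - 1)) :
    (∀ l : ℝ, 0 < l → l < 1 → (f l < 1 ↔ l < lstar)) ∧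
      (0 < lstar ∧ lstar < 1 ∧ f lstar = 1 ∧
        ∀ l : ℝ, 0 < l → l < 1 → f l = 1 → l = lstar) ∧
      (∀ l : ℝ, 0 < l → l ≤ lstar →
        3.382 < (1 + Real.sqrt (1 - l)) ^ 2 ∧ (1 + Real.sqrt (1 - l)) ^ 2 < 4) := by
  have hroot : thresholdCubic lstar = 0 := hstar ▸ thresholdCubic_cardano
  obtain ⟨hpos, hsmall⟩ := pos_and_lt_of_thresholdCubic_eq_zero hroot
  have hlt1 : lstar < 1 := hsmall.trans (by norm_num)
  refine ⟨fun l hl₀ hl₁ => ?_, ⟨hpos, hlt1, ?_, fun l hl₀ hl₁ hfl => ?_⟩,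
    fun l hl₀ hl => one_add_sqrt_one_sub_sq_bounds hl₀ (hl.trans_lt hsmall)⟩
  · rw [hf, one_add_sqrt_one_sub_sq_mul_lt_one_iff hl₀.le hl₁, ← hroot,
      thresholdCubic_strictMono.lt_iff_lt]
  · rw [hf, one_add_sqrt_one_sub_sq_mul_eq_one_iff hpos.le hlt1]
    exact hroot
  · rw [hf, one_add_sqrt_one_sub_sq_mul_eq_one_iff hl₀.le hl₁, ← hroot] at hfl
    exact thresholdCubic_strictMono.injective hfl
end

section
/- Let d be a real number with d > t-1 and for each partition λ = (λ_1 ≥ ... ≥ λ_k) of t define c_λ(d) = d^{-t} ∏_{i=1}^{k} ∏_{j=1}^{λ_i} (d + j - i). If t ≤ d, then among all partitions λ of t, c_λ(d) is minimized by the all-ones partition (1,1,...,1), for which c_{(1^t)}(d) = d^{-t} · d(d-1)···(d-t+1). -/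
/-!
Read the cells of `λ` row by row and number them `0, 1, …, t - 1`. With 0-indexed rows, the cell
`(i, j)` gets the number `m = λ₀ + ⋯ + λᵢ₋₁ + j`, and `i ≤ λ₀ + ⋯ + λᵢ₋₁` because all rows are
nonempty, so `d + j - i ≥ d - m ≥ 0`. Multiplying over all cells, the content product of `λ` dominates
`d (d - 1) ⋯ (d - t + 1)`, which is exactly the content product of the column `(1^t)`.
-/

/-- The normalized content product `c_λ(d) = d^{-t} ∏_{(i,j)∈λ} (d + j - i)`,
with the partition given as a list of row lengths (0-indexed cells). -/
noncomputable def contentProd (t : ℕ) (L : List ℕ) (d : ℝ) : ℝ :=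
  d ^ (-(t : ℤ)) *
    ∏ i ∈ Finset.range L.length, ∏ j ∈ Finset.range (L.getD i 0), (d + (j : ℝ) - (i : ℝ))

open Finset

theorem prod_range_sum_eq_prod_rows {M : Type*} [CommMonoid M] :
    ∀ (L : List ℕ) (f : ℕ → M),
      ∏ i ∈ range L.length, ∏ j ∈ range (L.getD i 0), f ((L.take i).sum + j)
        = ∏ m ∈ range L.sum, f m
  | [], f => by simp
  | a :: L, f => by
    rw [List.length_cons, prod_range_succ', List.sum_cons, prod_range_add, mul_comm]
    simp only [List.getD_cons_succ, List.take_succ_cons, List.sum_cons, List.getD_cons_zero,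
      List.take_zero, List.sum_nil, Nat.zero_add]
    rw [← prod_range_sum_eq_prod_rows L (fun m => f (a + m))]
    simp only [add_assoc]

theorem le_sum_take_of_pos {L : List ℕ} (hpos : ∀ a ∈ L, 0 < a) {i : ℕ} (hi : i ≤ L.length) :
    i ≤ (L.take i).sum := by
  simpa [hi] using
    List.length_le_sum_of_one_le (L.take i) fun a ha => hpos a (List.mem_of_mem_take ha)

theorem sum_take_add_lt_sum {L : List ℕ} {i j : ℕ} (hi : i < L.length) (hj : j < L.getD i 0) :
    (L.take i).sum + j < L.sum := by
  rw [List.getD_eq_getElem _ _ hi] at hj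
  have hle : (L.take (i + 1)).sum ≤ L.sum := by
    conv_rhs => rw [← List.take_append_drop (i + 1) L]
    rw [List.sum_append]
    omega
  rw [List.sum_take_succ L i hi] at hle
  omega

theorem prod_range_sub_le_prod_content {L : List ℕ} (hpos : ∀ a ∈ L, 0 < a) {d : ℝ}
    (hd : (L.sum : ℝ) ≤ d) :
    ∏ m ∈ range L.sum, (d - m)
      ≤ ∏ i ∈ range L.length, ∏ j ∈ range (L.getD i 0), (d + j - i) := by
  rw [← prod_range_sum_eq_prod_rows L (fun m => d - (m : ℝ))]
  have hcell : ∀ i ∈ range L.length, ∀ j ∈ range (L.getD i 0),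
      0 ≤ d - (((L.take i).sum + j : ℕ) : ℝ) := by
    intro i hi j hj
    have := sum_take_add_lt_sum (mem_range.mp hi) (mem_range.mp hj)
    have : (((L.take i).sum + j : ℕ) : ℝ) < L.sum := by exact_mod_cast this
    linarith
  refine prod_le_prod (fun i hi => prod_nonneg (hcell i hi)) fun i hi => ?_
  refine prod_le_prod (hcell i hi) fun j _ => ?_
  have : (i : ℝ) ≤ (L.take i).sum := by
    exact_mod_cast le_sum_take_of_pos hpos (mem_range.mp hi).le
  rw [Nat.cast_add]
  linarith

theorem contentProd_replicate_one (t : ℕ) (d : ℝ) :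
    contentProd t (List.replicate t 1) d = d ^ (-(t : ℤ)) * ∏ i ∈ range t, (d - i) := by
  unfold contentProd
  rw [List.length_replicate]
  congr 1
  refine prod_congr rfl fun i hi => ?_
  rw [List.getD_eq_getElem _ _ (by simpa using hi)]
  simp

theorem stmt_11_general (t : ℕ) (d : ℝ) (hd : (t : ℝ) ≤ d)
    (L : List ℕ) (hpos : ∀ a ∈ L, 0 < a) (hsum : L.sum = t) :
    contentProd t (List.replicate t 1) d ≤ contentProd t L d ∧
      contentProd t (List.replicate t 1) d
        = d ^ (-(t : ℤ)) * ∏ i ∈ Finset.range t, (d - (i : ℝ)) := by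
  refine ⟨?_, contentProd_replicate_one t d⟩
  rw [contentProd_replicate_one, contentProd]
  subst hsum
  exact mul_le_mul_of_nonneg_left (prod_range_sub_le_prod_content hpos hd)
    (zpow_nonneg ((Nat.cast_nonneg _).trans hd) _)

/-- when `t ≤ d`, among all partitions `L` of `t`, the content product
`c_λ(d)` is minimized by the all-ones partition `(1,…,1)`, whose value is
`d^{-t} · d(d-1)⋯(d-t+1)`. -/
theorem stmt_11 (t : ℕ) (ht : 0 < t) (d : ℝ) (hd : (t : ℝ) ≤ d)
    (L : List ℕ) (hsort : L.Pairwise (· ≥ ·)) (hpos : ∀ a ∈ L, 0 < a) (hsum : L.sum = t) :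
    contentProd t (List.replicate t 1) d ≤ contentProd t L d ∧
      contentProd t (List.replicate t 1) d
        = d ^ (-(t : ℤ)) * ∏ i ∈ Finset.range t, (d - (i : ℝ)) :=
  stmt_11_general t d hd L hpos hsum
end

section
/- Let t ≤ q be positive integers and consider tuples (σ_1,...,σ_N) of permutations in S_t. The tuple fails to be a complete derangement tuple (i.e., the permutations σ_1^{-1}σ_2, ..., σ_1^{-1}σ_N have a common fixed point) if and only if there exist π, ρ ∈ S_t and τ_1,...,τ_N ∈ S_{t-1} (the stabilizer of t) such that σ_i = π τ_i ρ for all i. -/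
/-!
If `p` is a common fixed point of the `σ₀⁻¹ σᵢ`, conjugating by the transposition `s = (p e)`
moves it to `e`: then `τᵢ = s σ₀⁻¹ σᵢ s⁻¹` fixes `e` and `σᵢ = (σ₀ s⁻¹) τᵢ s`. Conversely, if
`σᵢ = π τᵢ ρ` with every `τᵢ` fixing `e`, then `ρ⁻¹ e` is fixed by every `σⱼ⁻¹ σᵢ = ρ⁻¹ τⱼ⁻¹ τᵢ ρ`.
-/

namespace Equiv.Perm

variable {α ι : Type*}

theorem inv_mul_apply_eq_of_eq_mul_mul {e : α} {π ρ : Perm α} {τ σ : ι → Perm α}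
    (hτ : ∀ i, τ i e = e) (hσ : ∀ i, σ i = π * τ i * ρ) (i j : ι) :
    ((σ j)⁻¹ * σ i) (ρ⁻¹ e) = ρ⁻¹ e := by
  have hτj : (τ j)⁻¹ e = e := inv_eq_iff_eq.mpr (hτ j).symm
  simp [hσ, mul_apply, hτ i, hτj]

theorem exists_eq_mul_mul_of_inv_mul_apply_eq [DecidableEq α] (e p : α) (σ : ι → Perm α)
    (i₀ : ι) (hp : ∀ i, ((σ i₀)⁻¹ * σ i) p = p) :
    ∃ π ρ : Perm α, ∃ τ : ι → Perm α, (∀ i, τ i e = e) ∧ ∀ i, σ i = π * τ i * ρ := by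
  set s := swap p e
  refine ⟨σ i₀ * s⁻¹, s, fun i => s * (σ i₀)⁻¹ * σ i * s⁻¹, fun i => ?_, fun i => by group⟩
  have hs : s⁻¹ e = p := by simp [s]
  have hpi : (σ i₀)⁻¹ (σ i p) = p := hp i
  simp only [mul_apply, hs, hpi]
  exact swap_apply_left p e

theorem exists_inv_mul_apply_eq_iff_exists_eq_mul_mul [DecidableEq α] (e : α)
    (σ : ι → Perm α) (i₀ : ι) :
    (∃ p, ∀ i, ((σ i₀)⁻¹ * σ i) p = p) ↔
      ∃ π ρ : Perm α, ∃ τ : ι → Perm α, (∀ i, τ i e = e) ∧ ∀ i, σ i = π * τ i * ρ := by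
  constructor
  · rintro ⟨p, hp⟩
    exact exists_eq_mul_mul_of_inv_mul_apply_eq e p σ i₀ hp
  · rintro ⟨π, ρ, τ, hτ, hσ⟩
    exact ⟨ρ⁻¹ e, fun i => inv_mul_apply_eq_of_eq_mul_mul hτ hσ i i₀⟩

end Equiv.Perm

theorem stmt_14 (t N : ℕ) (ht : 0 < t)
    (σ : Fin (N + 1) → Equiv.Perm (Fin t)) :
    (∃ p : Fin t, ∀ i, ((σ 0)⁻¹ * σ i) p = p) ↔
      ∃ π ρ : Equiv.Perm (Fin t), ∃ τ : Fin (N + 1) → Equiv.Perm (Fin t),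
        (∀ i, τ i ⟨t - 1, by omega⟩ = ⟨t - 1, by omega⟩) ∧ (∀ i, σ i = π * τ i * ρ) :=
  Equiv.Perm.exists_inv_mul_apply_eq_iff_exists_eq_mul_mul _ σ 0
end

section
/- Let 0 ≤ λ ≤ λ_1 ≤ 1/2 with λ ≥ 0.06963, and set μ = sqrt(λ(1-λ)), μ_1 = sqrt(λ_1(1-λ_1)). Let A' be the N×N matrix whose first column is (λ_1, μ_1, 0, ..., 0)^T, whose first row is (λ_1, λμ_1, λμμ_1, λμ²μ_1, ..., λμ^{N-2}μ_1), and whose remaining entries satisfy A'_{ij} = λμ^{i-j} for 2 ≤ j ≤ i, A'_{ij} = μ for i = j-1 ≥ 2, and A'_{ij} = 0 for i < j-1. Then the spectral radius of A' is at most max( (1+sqrt(1-λ))²λ, λ_1 + (1+sqrt(1-λ))·sqrt((1-λ_1)λλ_1) ). -/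
/-!
Conjugating by a positive diagonal matrix `diag w` and applying Gershgorin's theorem shows that
every eigenvalue of `A` has modulus at most `R` as soon as `∑ⱼ |Aᵢⱼ| wⱼ ≤ R wᵢ` for every row `i`.
Write `λ = s²`, `μ = s √(1 - λ)` and `q = s + μ = (1 + √(1 - λ)) √λ`; the two terms of the
bound are `q²` and `λ₁ + q μ₁`. With `wⱼ = s (1 - μq) qʲ` for `j ≥ 2`, every row `i ≥ 2` of `A'`
is an exact eigen-equation for `q²` (since `q - μ = s`, the geometric sum along the row
telescopes), and the last row only loses its superdiagonal term. The weights `w₀, w₁` are chosen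
so that row `0` holds with `R = λ₁ + q μ₁` and row `1` with `R = q²`. The latter amounts to
`μ₁ λ (1 - μ²) ≤ μ q² (1 - μq)`, which follows from `μ₁ ≤ 1/2` and `λ ≤ 2 μ q² (1 - μq)`; this
polynomial inequality is where `0.06963 ≤ λ ≤ 1/2` enters.
-/

open scoped ENNReal NNReal

open Finset

theorem Matrix.spectralRadius_le_of_sum_norm_mul_le {n 𝕜 : Type*} [Fintype n] [DecidableEq n]
    [RCLike 𝕜] (A : Matrix n n 𝕜) {w : n → ℝ} (hw : ∀ i, 0 < w i) {R : ℝ}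
    (hA : ∀ i, ∑ j, ‖A i j‖ * w j ≤ R * w i) :
    spectralRadius 𝕜 A ≤ ENNReal.ofReal R := by
  have hw' : ∀ i, (w i : 𝕜) ≠ 0 := fun i ↦ RCLike.ofReal_ne_zero.2 (hw i).ne'
  let D : (Matrix n n 𝕜)ˣ :=
    ⟨diagonal fun i ↦ (w i : 𝕜), diagonal fun i ↦ (w i : 𝕜)⁻¹,
      by simp [diagonal_mul_diagonal, hw'], by simp [diagonal_mul_diagonal, hw']⟩
  set B : Matrix n n 𝕜 := (diagonal fun i ↦ (w i : 𝕜)⁻¹) * A * diagonal fun i ↦ (w i : 𝕜)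
  have hB : ∀ i j, ‖B i j‖ = (w i)⁻¹ * (‖A i j‖ * w j) := by
    intro i j
    simp only [B, mul_diagonal, diagonal_mul, norm_mul, norm_inv, norm_algebraMap',
      Real.norm_eq_abs, abs_of_pos (hw _)]
    ring
  refine iSup₂_le fun μ hμ ↦ ?_
  rw [← spectrum.units_conjugate' (u := D), ← spectrum_toLin',
    ← Module.End.hasEigenvalue_iff_mem_spectrum] at hμ
  obtain ⟨k, hk⟩ := eigenvalue_mem_ball (A := B) hμ
  rw [mem_closedBall_iff_norm] at hk
  have hμR : ‖μ‖ ≤ R := calc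
    ‖μ‖ ≤ ‖B k k‖ + ∑ j ∈ univ.erase k, ‖B k j‖ := by
      grw [← hk]; exact norm_le_norm_add_norm_sub' _ _
    _ = (w k)⁻¹ * ∑ j, ‖A k j‖ * w j := by
      rw [add_sum_erase _ (fun j ↦ ‖B k j‖) (mem_univ k), mul_sum]
      exact sum_congr rfl fun j _ ↦ hB k j
    _ ≤ R := by
      rw [inv_mul_le_iff₀ (hw k)]; linarith [hA k]
  rw [← enorm_eq_nnnorm, ← ofReal_norm]
  exact ENNReal.ofReal_le_ofReal hμR

theorem Finset.sum_range_le_sum_range_of_eq_zero {M : Type*} [AddCommMonoid M] [PartialOrder M]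
    [IsOrderedAddMonoid M] {f : ℕ → M} (hf : ∀ j, 0 ≤ f j) {K : ℕ}
    (hK : ∀ j, K ≤ j → f j = 0) (N : ℕ) : ∑ j ∈ range N, f j ≤ ∑ j ∈ range K, f j := by
  rcases le_total N K with h | h
  · exact sum_le_sum_of_subset_of_nonneg (range_subset_range.2 h) fun j _ _ ↦ hf j
  · rw [← sum_range_add_sum_Ico _ h, sum_eq_zero fun j hj ↦ hK j (mem_Ico.1 hj).1, add_zero]

theorem sq_le_two_mul_mul_sq_mul_one_sub {s t : ℝ} (hs : 0 < s) (ht : 0 < t)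
    (hst : s ^ 2 + t ^ 2 = 1) (hlow : 0.06963 ≤ s ^ 2) (hhigh : s ^ 2 ≤ 1 / 2) :
    s ^ 2 ≤ 2 * (s * t) * (s + s * t) ^ 2 * (1 - s * t * (s + s * t)) := by
  have ht_lo : 0 ≤ t - 0.7071 := by nlinarith
  have ht_hi : 0 ≤ 0.96457 - t := by nlinarith
  -- the chord of the concave `t ↦ √(1 - t²)` over `[0.7071, 0.96457]` lies below it
  have hchord : 1.924 - 1.722 * t ≤ s := by nlinarith [mul_nonneg ht_lo ht_hi]
  have hfactor : 0 ≤ 1 - (1 - t ^ 2) * t * (1 + t) := by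
    nlinarith [mul_nonneg ht_lo ht_hi, mul_nonneg (mul_nonneg ht_lo ht_lo) ht_hi]
  have hpoly :
      1 ≤ (1.924 - 1.722 * t) * (2 * t * (1 + t) ^ 2 * (1 - (1 - t ^ 2) * t * (1 + t))) := by
    nlinarith [mul_nonneg ht_lo ht_hi, mul_nonneg (mul_nonneg ht_lo ht_lo) ht_hi,
      mul_nonneg (pow_nonneg ht_lo 3) ht_hi, mul_nonneg (pow_nonneg ht_lo 4) ht_hi]
  have hone : 1 ≤ s * (2 * t * (1 + t) ^ 2 * (1 - (1 - t ^ 2) * t * (1 + t))) :=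
    hpoly.trans (by gcongr)
  calc s ^ 2 ≤ s ^ 2 * (s * (2 * t * (1 + t) ^ 2 * (1 - (1 - t ^ 2) * t * (1 + t)))) :=
        le_mul_of_one_le_right (by positivity) hone
    _ = _ := by rw [show 1 - t ^ 2 = s ^ 2 by linarith]; ring

def staircaseEntry (lam lam1 mu mu1 : ℝ) (i j : ℕ) : ℝ :=
  if j = 0 then (if i = 0 then lam1 else if i = 1 then mu1 else 0)
  else if i = 0 then lam * mu ^ (j - 1) * mu1
  else if j ≤ i then lam * mu ^ (i - j)
  else if i + 1 = j then mu else 0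

def staircaseWeight (s mu : ℝ) : ℕ → ℝ
  | 0 => s ^ 2 * (s + mu) * (1 - mu ^ 2)
  | 1 => (s + mu) ^ 2 * (1 - mu * (s + mu))
  | j + 2 => s * (1 - mu * (s + mu)) * (s + mu) ^ (j + 2)

section Staircase

variable {s mu lam1 mu1 : ℝ}

theorem staircaseEntry_nonneg {lam : ℝ} (hlam : 0 ≤ lam) (hlam1 : 0 ≤ lam1) (hmu : 0 ≤ mu)
    (hmu1 : 0 ≤ mu1) (i j : ℕ) : 0 ≤ staircaseEntry lam lam1 mu mu1 i j := by
  unfold staircaseEntry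
  split_ifs <;> positivity

theorem staircaseWeight_pos (hs : 0 < s) (hmu : 0 ≤ mu) (hmq : mu * (s + mu) < 1) (j : ℕ) :
    0 < staircaseWeight s mu j := by
  have hmu2 : 0 < 1 - mu ^ 2 := by nlinarith
  have hmq' : 0 < 1 - mu * (s + mu) := by linarith
  rcases j with _ | _ | j
  · exact mul_pos (by positivity) hmu2
  · exact mul_pos (by positivity) hmq'
  · exact mul_pos (mul_pos hs hmq') (by positivity)

theorem staircaseEntry_eq_zero {lam : ℝ} {i j : ℕ} (hi : i ≠ 0) (hj : i + 2 ≤ j) :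
    staircaseEntry lam lam1 mu mu1 i j = 0 := by
  unfold staircaseEntry
  split_ifs <;> first | rfl | omega

theorem sum_staircaseEntry_add_two_mul_eq (m : ℕ) :
    ∑ j ∈ range (m + 4), staircaseEntry (s ^ 2) lam1 mu mu1 (m + 2) j * staircaseWeight s mu j
      = (s + mu) ^ 2 * staircaseWeight s mu (m + 2) := by
  have hgeom := geom_sum₂_mul (s + mu) mu (m + 1)
  rw [sum_range_succ, sum_range_succ', sum_range_succ']
  have hmid : ∀ k ∈ range (m + 1), staircaseEntry (s ^ 2) lam1 mu mu1 (m + 2) (k + 1 + 1)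
      * staircaseWeight s mu (k + 1 + 1)
      = s ^ 3 * (1 - mu * (s + mu)) * (s + mu) ^ 2 * ((s + mu) ^ k * mu ^ (m - k)) := by
    intro k hk
    have hkm : k ≤ m := Nat.lt_succ_iff.1 (mem_range.1 hk)
    simp only [staircaseEntry, Nat.add_eq_zero_iff, one_ne_zero, and_false, and_self,
      ↓reduceIte, OfNat.ofNat_ne_zero, add_le_add_iff_right, hkm, Nat.reduceSubDiff,
      staircaseWeight]
    ring
  rw [sum_congr rfl hmid, ← mul_sum]
  simp only [staircaseEntry, zero_add, one_ne_zero, ↓reduceIte, Nat.add_eq_zero_iff,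
    OfNat.ofNat_ne_zero, and_false, le_add_iff_nonneg_left, zero_le, Nat.add_one_sub_one,
    staircaseWeight, Nat.reduceEqDiff, zero_mul, add_zero, add_le_add_iff_left, Nat.reduceLeDiff]
  rw [Nat.add_sub_cancel] at hgeom
  linear_combination s ^ 2 * (1 - mu * (s + mu)) * (s + mu) ^ 2 * hgeom

variable (hs : 0 < s) (hmu : 0 ≤ mu) (hmq : mu * (s + mu) < 1)
include hs hmu hmq

theorem sum_pow_mul_staircaseWeight_succ_le (N : ℕ) :
    ∑ k ∈ range N, mu ^ k * staircaseWeight s mu (k + 1) ≤ (s + mu) ^ 2 * (1 - mu ^ 2) := by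
  have hgeom := mul_neg_geom_sum (mu * (s + mu)) N
  calc ∑ k ∈ range N, mu ^ k * staircaseWeight s mu (k + 1)
      ≤ ∑ k ∈ range (N + 1), mu ^ k * staircaseWeight s mu (k + 1) := by
        rw [sum_range_succ]
        exact le_add_of_nonneg_right
          (mul_nonneg (by positivity) (staircaseWeight_pos hs hmu hmq _).le)
    _ = (s + mu) ^ 2 * (1 - mu * (s + mu))
          + s * mu * (s + mu) ^ 2 * ((1 - mu * (s + mu)) * ∑ k ∈ range N, (mu * (s + mu)) ^ k) := by
        rw [sum_range_succ', mul_sum, mul_sum]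
        simp only [staircaseWeight, pow_zero, one_mul, pow_succ, mul_pow]
        rw [add_comm]
        congr 1
        exact sum_congr rfl fun k _ ↦ by ring
    _ ≤ (s + mu) ^ 2 * (1 - mu ^ 2) := by
        have : 0 ≤ s * mu * (s + mu) ^ 2 * (mu * (s + mu)) ^ N := by positivity
        rw [hgeom]
        linear_combination this

theorem sum_staircaseEntry_zero_mul_le (hlam1 : 0 ≤ lam1) (hmu1 : 0 ≤ mu1) (N : ℕ) :
    ∑ j ∈ range N, staircaseEntry (s ^ 2) lam1 mu mu1 0 j * staircaseWeight s mu j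
      ≤ (lam1 + (s + mu) * mu1) * staircaseWeight s mu 0 := by
  calc ∑ j ∈ range N, staircaseEntry (s ^ 2) lam1 mu mu1 0 j * staircaseWeight s mu j
      ≤ ∑ j ∈ range (N + 1), staircaseEntry (s ^ 2) lam1 mu mu1 0 j * staircaseWeight s mu j := by
        rw [sum_range_succ]
        exact le_add_of_nonneg_right (mul_nonneg
          (staircaseEntry_nonneg (by positivity) hlam1 hmu hmu1 _ _)
          (staircaseWeight_pos hs hmu hmq _).le)
    _ = lam1 * staircaseWeight s mu 0
          + s ^ 2 * mu1 * ∑ k ∈ range N, mu ^ k * staircaseWeight s mu (k + 1) := by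
        rw [sum_range_succ', add_comm, mul_sum]
        simp [staircaseEntry, mul_assoc, mul_left_comm]
    _ ≤ lam1 * staircaseWeight s mu 0 + s ^ 2 * mu1 * ((s + mu) ^ 2 * (1 - mu ^ 2)) := by
        grw [sum_pow_mul_staircaseWeight_succ_le hs hmu hmq]
    _ = (lam1 + (s + mu) * mu1) * staircaseWeight s mu 0 := by
        simp only [staircaseWeight]; ring

theorem sum_staircaseEntry_one_mul_le (hlam1 : 0 ≤ lam1) (hmu1 : 0 ≤ mu1)
    (hbdry : mu1 * s ^ 2 * (1 - mu ^ 2) ≤ mu * (s + mu) ^ 2 * (1 - mu * (s + mu))) (N : ℕ) :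
    ∑ j ∈ range N, staircaseEntry (s ^ 2) lam1 mu mu1 1 j * staircaseWeight s mu j
      ≤ (s + mu) ^ 2 * staircaseWeight s mu 1 := by
  calc ∑ j ∈ range N, staircaseEntry (s ^ 2) lam1 mu mu1 1 j * staircaseWeight s mu j
      ≤ ∑ j ∈ range 3, staircaseEntry (s ^ 2) lam1 mu mu1 1 j * staircaseWeight s mu j :=
        sum_range_le_sum_range_of_eq_zero
          (fun j ↦ mul_nonneg (staircaseEntry_nonneg (by positivity) hlam1 hmu hmu1 _ _)
            (staircaseWeight_pos hs hmu hmq _).le)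
          (fun j hj ↦ by rw [staircaseEntry_eq_zero one_ne_zero hj, zero_mul]) N
    _ ≤ (s + mu) ^ 2 * staircaseWeight s mu 1 := by
        simp only [staircaseEntry, one_ne_zero, ↓reduceIte, Nat.reduceAdd, staircaseWeight,
          ite_mul, zero_mul, sum_range_succ, range_one, sum_singleton, Std.le_refl, tsub_self,
          pow_zero, mul_one, OfNat.ofNat_ne_zero, Nat.not_ofNat_le_one, zero_add]
        linear_combination (s + mu) * hbdry

theorem sum_staircaseEntry_mul_le (hlam1 : 0 ≤ lam1) (hmu1 : 0 ≤ mu1)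
    (hbdry : mu1 * s ^ 2 * (1 - mu ^ 2) ≤ mu * (s + mu) ^ 2 * (1 - mu * (s + mu))) {R : ℝ}
    (hR : (s + mu) ^ 2 ≤ R) (hR' : lam1 + (s + mu) * mu1 ≤ R) (N i : ℕ) :
    ∑ j ∈ range N, staircaseEntry (s ^ 2) lam1 mu mu1 i j * staircaseWeight s mu j
      ≤ R * staircaseWeight s mu i := by
  have hw := fun i ↦ (staircaseWeight_pos hs hmu hmq i).le
  rcases i with _ | _ | m
  · exact (sum_staircaseEntry_zero_mul_le hs hmu hmq hlam1 hmu1 N).trans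
      (mul_le_mul_of_nonneg_right hR' (hw 0))
  · exact (sum_staircaseEntry_one_mul_le hs hmu hmq hlam1 hmu1 hbdry N).trans
      (mul_le_mul_of_nonneg_right hR (hw 1))
  · calc ∑ j ∈ range N, staircaseEntry (s ^ 2) lam1 mu mu1 (m + 2) j * staircaseWeight s mu j
        ≤ ∑ j ∈ range (m + 4), staircaseEntry (s ^ 2) lam1 mu mu1 (m + 2) j
            * staircaseWeight s mu j :=
          sum_range_le_sum_range_of_eq_zero
            (fun j ↦ mul_nonneg (staircaseEntry_nonneg (by positivity) hlam1 hmu hmu1 _ _) (hw j))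
            (fun j hj ↦ by rw [staircaseEntry_eq_zero (by omega) hj, zero_mul]) N
      _ = (s + mu) ^ 2 * staircaseWeight s mu (m + 2) := sum_staircaseEntry_add_two_mul_eq m
      _ ≤ R * staircaseWeight s mu (m + 2) := mul_le_mul_of_nonneg_right hR (hw _)

end Staircase

theorem spectralRadius_staircase_le_s19 {s mu lam1 mu1 : ℝ} {N : ℕ} (A : Matrix (Fin N) (Fin N) ℝ)
    (hA : ∀ i j : Fin N, A i j = staircaseEntry (s ^ 2) lam1 mu mu1 i j)
    (hs : 0 < s) (hmu : 0 ≤ mu) (hlam1 : 0 ≤ lam1) (hmu1 : 0 ≤ mu1) (hmu1' : mu1 ≤ 1 / 2)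
    (hineq : s ^ 2 ≤ 2 * mu * (s + mu) ^ 2 * (1 - mu * (s + mu))) :
    spectralRadius ℂ (A.map ((↑) : ℝ → ℂ))
      ≤ ENNReal.ofReal (max ((s + mu) ^ 2) (lam1 + (s + mu) * mu1)) := by
  have hmq : mu * (s + mu) < 1 := by
    by_contra! h
    have : 2 * mu * (s + mu) ^ 2 * (1 - mu * (s + mu)) ≤ 0 :=
      mul_nonpos_of_nonneg_of_nonpos (by positivity) (by linarith)
    nlinarith [pow_pos hs 2]
  have hbdry : mu1 * s ^ 2 * (1 - mu ^ 2) ≤ mu * (s + mu) ^ 2 * (1 - mu * (s + mu)) := by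
    nlinarith [mul_le_mul_of_nonneg_right hmu1' (sq_nonneg s),
      mul_nonneg hmu1 (mul_nonneg (sq_nonneg s) (sq_nonneg mu))]
  refine Matrix.spectralRadius_le_of_sum_norm_mul_le (A.map ((↑) : ℝ → ℂ)) (w := fun j ↦ staircaseWeight s mu j)
    (fun j ↦ staircaseWeight_pos hs hmu hmq j) fun i ↦ ?_
  calc ∑ j, ‖A.map ((↑) : ℝ → ℂ) i j‖ * staircaseWeight s mu j
      = ∑ j ∈ range N, staircaseEntry (s ^ 2) lam1 mu mu1 i j * staircaseWeight s mu j := by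
        rw [← Fin.sum_univ_eq_sum_range (fun j ↦ staircaseEntry (s ^ 2) lam1 mu mu1 i j
          * staircaseWeight s mu j)]
        refine sum_congr rfl fun j _ ↦ ?_
        rw [Matrix.map_apply, Complex.norm_real, hA, Real.norm_of_nonneg
          (staircaseEntry_nonneg (by positivity) hlam1 hmu hmu1 i j)]
    _ ≤ _ := sum_staircaseEntry_mul_le hs hmu hmq hlam1 hmu1 hbdry
        (le_max_left _ _) (le_max_right _ _) N i

theorem stmt_19_general {N : ℕ}
    (lam lam1 : ℝ) (hlow : 0.06963 ≤ lam) (h1 : lam ≤ lam1) (h2 : lam1 ≤ 1 / 2)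
    (mu mu1 : ℝ) (hmu : mu = Real.sqrt (lam * (1 - lam)))
    (hmu1 : mu1 = Real.sqrt (lam1 * (1 - lam1)))
    (A : Matrix (Fin N) (Fin N) ℝ)
    (hA : ∀ i j : Fin N, A i j =
      if (j : ℕ) = 0 then
        (if (i : ℕ) = 0 then lam1 else if (i : ℕ) = 1 then mu1 else 0)
      else if (i : ℕ) = 0 then lam * mu ^ ((j : ℕ) - 1) * mu1
      else if (j : ℕ) ≤ (i : ℕ) then lam * mu ^ ((i : ℕ) - (j : ℕ))
      else if (i : ℕ) + 1 = (j : ℕ) then mu else 0) :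
    (⨆ μ' ∈ spectrum ℂ (A.map (fun x : ℝ => (x : ℂ))), (‖μ'‖₊ : ℝ≥0∞))
      ≤ ENNReal.ofReal (max ((1 + Real.sqrt (1 - lam)) ^ 2 * lam)
          (lam1 + (1 + Real.sqrt (1 - lam)) * Real.sqrt ((1 - lam1) * lam * lam1))) := by
  have hlam : 0 < lam := by linarith
  set s := √lam
  set t := √(1 - lam)
  have hs : 0 < s := Real.sqrt_pos.2 hlam
  have ht : 0 < t := Real.sqrt_pos.2 (by linarith)
  have hs2 : s ^ 2 = lam := Real.sq_sqrt hlam.le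
  have ht2 : t ^ 2 = 1 - lam := Real.sq_sqrt (by linarith)
  have hmu_eq : mu = s * t := by rw [hmu, Real.sqrt_mul hlam.le]
  have hmu_nonneg : 0 ≤ mu := hmu ▸ Real.sqrt_nonneg _
  have hmu1_nonneg : 0 ≤ mu1 := hmu1 ▸ Real.sqrt_nonneg _
  have hmu1_le : mu1 ≤ 1 / 2 := by
    rw [hmu1, Real.sqrt_le_left (by norm_num)]; nlinarith
  have hineq := sq_le_two_mul_mul_sq_mul_one_sub hs ht (by linarith) (by linarith)
    (by linarith)
  rw [← hmu_eq] at hineq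
  have hR : (1 + t) ^ 2 * lam = (s + mu) ^ 2 := by rw [hmu_eq, ← hs2]; ring
  have hR' : (1 + t) * √((1 - lam1) * lam * lam1) = (s + mu) * mu1 := by
    rw [show (1 - lam1) * lam * lam1 = lam * (lam1 * (1 - lam1)) by ring, Real.sqrt_mul hlam.le,
      ← hmu1, hmu_eq]
    ring
  rw [hR, hR']
  exact spectralRadius_staircase_le_s19 A (fun i j ↦ by rw [hA, hs2]; rfl) hs hmu_nonneg
    (by linarith) hmu1_nonneg hmu1_le hineq

/-- Gershgorin-type bound for the perturbed staircase block matrix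
`A'` whose first gate has eigenvalue `λ₁` instead of `λ`: its spectral radius is
at most `max((1+√(1-λ))²λ, λ₁ + (1+√(1-λ))·√((1-λ₁)λλ₁))`. -/
theorem stmt_19 {N : ℕ} (hN : 2 ≤ N)
    (lam lam1 : ℝ) (hlow : 0.06963 ≤ lam) (h1 : lam ≤ lam1) (h2 : lam1 ≤ 1 / 2)
    (mu mu1 : ℝ) (hmu : mu = Real.sqrt (lam * (1 - lam)))
    (hmu1 : mu1 = Real.sqrt (lam1 * (1 - lam1)))
    (A : Matrix (Fin N) (Fin N) ℝ)
    (hA : ∀ i j : Fin N, A i j =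
      if (j : ℕ) = 0 then
        (if (i : ℕ) = 0 then lam1 else if (i : ℕ) = 1 then mu1 else 0)
      else if (i : ℕ) = 0 then lam * mu ^ ((j : ℕ) - 1) * mu1
      else if (j : ℕ) ≤ (i : ℕ) then lam * mu ^ ((i : ℕ) - (j : ℕ))
      else if (i : ℕ) + 1 = (j : ℕ) then mu else 0) :
    (⨆ μ' ∈ spectrum ℂ (A.map (fun x : ℝ => (x : ℂ))), (‖μ'‖₊ : ℝ≥0∞))
      ≤ ENNReal.ofReal (max ((1 + Real.sqrt (1 - lam)) ^ 2 * lam)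
          (lam1 + (1 + Real.sqrt (1 - lam)) * Real.sqrt ((1 - lam1) * lam * lam1))) :=
  stmt_19_general lam lam1 hlow h1 h2 mu mu1 hmu hmu1 A hA
end
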